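/- arXiv:2601.12238 — 10 statements merged into one kernel-verified Lean document; each statement's English description precedes it below -/
import Mathlib

section
/- Let d ≥ 1 and let μ, L > 0. Let m : ℝ^d → ℝ^d satisfy ⟨m(x) − m(y), x − y⟩ ≥ μ‖x − y‖² and ‖m(x) − m(y)‖ ≤ L‖x − y‖ for all x, y ∈ ℝ^d. Let θ, ξ ∈ ℝ^d, let θ⋆, θ⋆′ ∈ ℝ^d with m(θ⋆′) = 0, and let 0 < γ ≤ min{μ/L², 1/L}. Define the updated iterate θ′ := θ − γ m(θ) − γ ξ and the increment M := −2γ⟨(θ − θ⋆′) − γ m(θ), ξ⟩. Then ‖θ′ − θ⋆′‖² ≤ (1 − γμ/2)‖θ − θ⋆‖² + (2/(γμ))‖θ⋆ − θ⋆′‖² + γ²‖ξ‖² + M. -/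
open scoped InnerProductSpace

/-! The gradient step `e ↦ e - γ m θ` is a `(1 - γμ)`-contraction in squared norm, since the
cross term contributes `-2γμ‖e‖²` and the Lipschitz term only `γ²L²‖e‖² ≤ γμ‖e‖²`. Splitting
`θ - θ⋆′ = (θ - θ⋆) + (θ⋆ - θ⋆′)` by Young's inequality with weight `γμ/2` turns the contraction
factor into `1 - γμ/2` at the price of `2/(γμ)‖θ⋆ - θ⋆′‖²`; the noise enters only through the
exact expansion of `‖u - γξ‖²`. The condition `γμ ≤ 1` needed for the Young step follows from
`γL² ≤ μ` because strong monotonicity forces `μ ≤ L`. -/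

section InnerProductSpace

variable {E : Type*} [NormedAddCommGroup E] [InnerProductSpace ℝ E]

theorem le_of_strongMono_of_lipschitz [Nontrivial E] {m : E → E} {μ L : ℝ}
    (hmono : ∀ x y, μ * ‖x - y‖ ^ 2 ≤ ⟪m x - m y, x - y⟫_ℝ)
    (hlip : ∀ x y, ‖m x - m y‖ ≤ L * ‖x - y‖) : μ ≤ L := by
  obtain ⟨x, hx⟩ := exists_ne (0 : E)
  have hcs : μ * ‖x‖ ^ 2 ≤ L * ‖x‖ ^ 2 :=
    calc μ * ‖x‖ ^ 2 ≤ ⟪m x - m 0, x⟫_ℝ := by simpa only [sub_zero] using hmono x 0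
      _ ≤ ‖m x - m 0‖ * ‖x‖ := real_inner_le_norm _ _
      _ ≤ L * ‖x‖ * ‖x‖ := by gcongr; simpa only [sub_zero] using hlip x 0
      _ = L * ‖x‖ ^ 2 := by ring
  exact le_of_mul_le_mul_right hcs (by positivity)

theorem norm_sub_smul_sq_le_of_strongMono {e g : E} {μ L γ : ℝ} (hmono : μ * ‖e‖ ^ 2 ≤ ⟪g, e⟫_ℝ)
    (hlip : ‖g‖ ≤ L * ‖e‖) (hγ : 0 ≤ γ) (hγL : γ * L ^ 2 ≤ μ) :
    ‖e - γ • g‖ ^ 2 ≤ (1 - γ * μ) * ‖e‖ ^ 2 := by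
  have hg : ‖g‖ ^ 2 ≤ L ^ 2 * ‖e‖ ^ 2 := by
    rw [← mul_pow]; exact pow_le_pow_left₀ (norm_nonneg g) hlip 2
  rw [norm_sub_sq_real, norm_smul, real_inner_smul_right, real_inner_comm, mul_pow,
    Real.norm_eq_abs, sq_abs]
  nlinarith [mul_le_mul_of_nonneg_left hmono hγ, mul_le_mul_of_nonneg_left hg (sq_nonneg γ),
    mul_le_mul_of_nonneg_left hγL (mul_nonneg hγ (sq_nonneg ‖e‖))]

theorem norm_sub_smul_sq (u ξ : E) (γ : ℝ) :
    ‖u - γ • ξ‖ ^ 2 = ‖u‖ ^ 2 + γ ^ 2 * ‖ξ‖ ^ 2 + (-2 * γ) * ⟪u, ξ⟫_ℝ := by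
  rw [norm_sub_sq_real, norm_smul, real_inner_smul_right, mul_pow, Real.norm_eq_abs, sq_abs]
  ring

theorem norm_add_sq_le_of_pos (a b : E) {ε : ℝ} (hε : 0 < ε) :
    ‖a + b‖ ^ 2 ≤ (1 + ε) * ‖a‖ ^ 2 + (1 + ε⁻¹) * ‖b‖ ^ 2 := by
  have hab : 2 * ⟪a, b⟫_ℝ ≤ ε * ‖a‖ ^ 2 + ε⁻¹ * ‖b‖ ^ 2 := by
    have hsq : 0 ≤ ε⁻¹ * (ε * ‖a‖ - ‖b‖) ^ 2 := by positivity
    have hε' : ε⁻¹ * ε = 1 := inv_mul_cancel₀ hε.ne'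
    nlinarith [real_inner_le_norm a b]
  rw [norm_add_sq_real]
  linarith

theorem one_sub_mul_norm_add_sq_le (a b : E) {t : ℝ} (ht0 : 0 < t) (ht1 : t ≤ 1) :
    (1 - t) * ‖a + b‖ ^ 2 ≤ (1 - t / 2) * ‖a‖ ^ 2 + 2 / t * ‖b‖ ^ 2 := by
  have hyoung := norm_add_sq_le_of_pos a b (half_pos ht0)
  have hcoef : (1 - t) * (1 + (t / 2)⁻¹) ≤ 2 / t := by
    have h2t : t * (2 / t) = 2 := mul_div_cancel₀ 2 ht0.ne'
    rw [inv_div]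
    nlinarith
  calc (1 - t) * ‖a + b‖ ^ 2
      ≤ (1 - t) * ((1 + t / 2) * ‖a‖ ^ 2 + (1 + (t / 2)⁻¹) * ‖b‖ ^ 2) := by gcongr
    _ = (1 - t) * (1 + t / 2) * ‖a‖ ^ 2 + (1 - t) * (1 + (t / 2)⁻¹) * ‖b‖ ^ 2 := by ring
    _ ≤ (1 - t / 2) * ‖a‖ ^ 2 + 2 / t * ‖b‖ ^ 2 := by
      gcongr
      nlinarith

end InnerProductSpace

theorem sgd_one_step_tracking_error_general
    (d : ℕ) (hd : 1 ≤ d) (μ L : ℝ) (hμ : 0 < μ)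
    (m : EuclideanSpace ℝ (Fin d) → EuclideanSpace ℝ (Fin d))
    (hmono : ∀ x y, μ * ‖x - y‖ ^ 2 ≤ ⟪m x - m y, x - y⟫_ℝ)
    (hlip : ∀ x y, ‖m x - m y‖ ≤ L * ‖x - y‖)
    (θ ξ θs θs' : EuclideanSpace ℝ (Fin d))
    (hzero : m θs' = 0)
    (γ : ℝ) (hγ0 : 0 < γ) (hγ : γ ≤ min (μ / L ^ 2) (1 / L)) :
    ‖θ - γ • m θ - γ • ξ - θs'‖ ^ 2 ≤
      (1 - γ * μ / 2) * ‖θ - θs‖ ^ 2 + 2 / (γ * μ) * ‖θs - θs'‖ ^ 2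
        + γ ^ 2 * ‖ξ‖ ^ 2 + (-2 * γ) * ⟪θ - θs' - γ • m θ, ξ⟫_ℝ := by
  have : Nonempty (Fin d) := ⟨⟨0, hd⟩⟩
  have hμL : μ ≤ L := le_of_strongMono_of_lipschitz hmono hlip
  have hγL : γ * L ^ 2 ≤ μ :=
    (le_div_iff₀ (pow_pos (hμ.trans_le hμL) 2)).mp (hγ.trans (min_le_left _ _))
  have hγμ : γ * μ ≤ 1 := by
    have hsq : γ * μ * μ ≤ 1 * μ :=
      calc γ * μ * μ = γ * μ ^ 2 := by ring
        _ ≤ γ * L ^ 2 := by gcongr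
        _ ≤ 1 * μ := by rwa [one_mul]
    exact le_of_mul_le_mul_right hsq hμ
  have hcontract : ‖θ - θs' - γ • m θ‖ ^ 2 ≤ (1 - γ * μ) * ‖θ - θs'‖ ^ 2 := by
    have hmono' := hmono θ θs'
    have hlip' := hlip θ θs'
    rw [hzero, sub_zero] at hmono' hlip'
    exact norm_sub_smul_sq_le_of_strongMono hmono' hlip' hγ0.le hγL
  have hyoung := one_sub_mul_norm_add_sq_le (θ - θs) (θs - θs') (mul_pos hγ0 hμ) hγμ
  rw [sub_add_sub_cancel] at hyoung
  rw [show θ - γ • m θ - γ • ξ - θs' = θ - θs' - γ • m θ - γ • ξ by abel, norm_sub_smul_sq]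
  linarith

/-- One-step recursive relation for the SGD tracking error under strong monotonicity
and Lipschitz continuity of the (conditional mean) gradient map. -/
theorem sgd_one_step_tracking_error
    (d : ℕ) (hd : 1 ≤ d) (μ L : ℝ) (hμ : 0 < μ) (hL : 0 < L)
    (m : EuclideanSpace ℝ (Fin d) → EuclideanSpace ℝ (Fin d))
    (hmono : ∀ x y, μ * ‖x - y‖ ^ 2 ≤ ⟪m x - m y, x - y⟫_ℝ)
    (hlip : ∀ x y, ‖m x - m y‖ ≤ L * ‖x - y‖)
    (θ ξ θs θs' : EuclideanSpace ℝ (Fin d))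
    (hzero : m θs' = 0)
    (γ : ℝ) (hγ0 : 0 < γ) (hγ : γ ≤ min (μ / L ^ 2) (1 / L)) :
    ‖θ - γ • m θ - γ • ξ - θs'‖ ^ 2 ≤
      (1 - γ * μ / 2) * ‖θ - θs‖ ^ 2 + 2 / (γ * μ) * ‖θs - θs'‖ ^ 2
        + γ ^ 2 * ‖ξ‖ ^ 2 + (-2 * γ) * ⟪θ - θs' - γ • m θ, ξ⟫_ℝ :=
  sgd_one_step_tracking_error_general d hd μ L hμ m hmono hlip θ ξ θs θs' hzero γ hγ0 hγ
end

section
/- Let (Ω, 𝓕, (𝓕_t)_{t≥0}, ℙ) be a filtered probability space. For each t ≥ 0 let m_{t+1} : ℝ^d → ℝ^d be such that m_{t+1}(θ) is 𝓕_t-measurable for each θ, satisfying ⟨m_{t+1}(x) − m_{t+1}(y), x − y⟩ ≥ μ‖x − y‖² and ‖m_{t+1}(x) − m_{t+1}(y)‖ ≤ L‖x − y‖ for all x, y. Let θ⋆_{t+1} be 𝓕_t-measurable with m_{t+1}(θ⋆_{t+1}) = 0 a.s., let the iterates θ_t be 𝓕_t-measurable with θ_{t+1} = θ_t − γ m_{t+1}(θ_t)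 − γ ξ_{t+1}(θ_t), where ξ_{t+1}(θ_t) is 𝓕_{t+1}-measurable, square-integrable, and 𝔼[ξ_{t+1}(θ_t) | 𝓕_t] = 0 a.s. Assume there exist Δ, σ > 0 with 𝔼[‖θ⋆_t − θ⋆_{t+1}‖²] ≤ Δ² and 𝔼[‖ξ_{t+1}(θ_t)‖²] ≤ σ² for all t, and that θ₀ is deterministic and all relevant quantities are integrable. If 0 < γ ≤ min{μ/L², 1/L}, then for all t ≥ 0: 𝔼‖θ_{t+1} − θ⋆_{t+1}‖² ≤ (1 − γμ/2)^{t+1} ‖θ₀ − θ⋆₀‖² + 4Δ²/(γ²μ²) + 2σ²γ/μ. -/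
/-! With `a = θₜ - θ⋆ₜ₊₁`, the deterministic part of the step, `a - γ (m(θₜ) - m(θ⋆ₜ₊₁))`,
shrinks `‖a‖²` by the factor `1 - γμ` as soon as `γL² ≤ μ`. The noise is orthogonal in `L²` to
everything `𝓕ₜ`-measurable, so it only adds `γ²σ²`, and Young's inequality with weight `γμ/2`
trades the drift of the target for a factor `1 + γμ/2` on the previous error. Hence
`Vₜ₊₁ ≤ (1 - γμ/2) Vₜ + 2Δ²/(γμ) + γ²σ²`, whose fixed point is `4Δ²/(γμ)² + 2γσ²/μ`. -/

open MeasureTheory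
open scoped InnerProductSpace

theorem add_sq_le_one_add_mul_add {a b ε : ℝ} (hε : 0 < ε) :
    (a + b) ^ 2 ≤ (1 + ε) * a ^ 2 + (1 + ε⁻¹) * b ^ 2 := by
  have hgap : (1 + ε) * a ^ 2 + (1 + ε⁻¹) * b ^ 2 - (a + b) ^ 2 = (ε * a - b) ^ 2 / ε := by
    field_simp
    ring
  have : 0 ≤ (ε * a - b) ^ 2 / ε := by positivity
  linarith

theorem norm_add_sq_le_one_add_mul_add {E : Type*} [SeminormedAddGroup E] (u v : E) {ε : ℝ}
    (hε : 0 < ε) : ‖u + v‖ ^ 2 ≤ (1 + ε) * ‖u‖ ^ 2 + (1 + ε⁻¹) * ‖v‖ ^ 2 :=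
  (pow_le_pow_left₀ (norm_nonneg _) (norm_add_le u v) 2).trans
    (add_sq_le_one_add_mul_add hε)

theorem le_of_strongly_monotone_of_lipschitz {E : Type*} [NormedAddCommGroup E]
    [InnerProductSpace ℝ E] [Nontrivial E] {f : E → E} {μ L : ℝ}
    (hmono : ∀ x y, μ * ‖x - y‖ ^ 2 ≤ ⟪f x - f y, x - y⟫_ℝ)
    (hlip : ∀ x y, ‖f x - f y‖ ≤ L * ‖x - y‖) : μ ≤ L := by
  obtain ⟨x, hx⟩ := exists_ne (0 : E)
  have hpos : 0 < ‖x - 0‖ ^ 2 := by rw [sub_zero]; exact pow_pos (norm_pos_iff.2 hx) 2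
  refine le_of_mul_le_mul_right ?_ hpos
  calc μ * ‖x - 0‖ ^ 2 ≤ ⟪f x - f 0, x - 0⟫_ℝ := hmono x 0
    _ ≤ ‖f x - f 0‖ * ‖x - 0‖ := real_inner_le_norm _ _
    _ ≤ L * ‖x - 0‖ * ‖x - 0‖ := by gcongr; exact hlip x 0
    _ = L * ‖x - 0‖ ^ 2 := by ring

theorem norm_sub_smul_sq_le {E : Type*} [NormedAddCommGroup E] [InnerProductSpace ℝ E]
    {a v : E} {μ L γ : ℝ} (hγ : 0 ≤ γ) (hγL : γ * L ^ 2 ≤ μ)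
    (hmono : μ * ‖a‖ ^ 2 ≤ ⟪v, a⟫_ℝ) (hlip : ‖v‖ ≤ L * ‖a‖) :
    ‖a - γ • v‖ ^ 2 ≤ (1 - γ * μ) * ‖a‖ ^ 2 := by
  have hv : γ ^ 2 * ‖v‖ ^ 2 ≤ γ * μ * ‖a‖ ^ 2 :=
    calc γ ^ 2 * ‖v‖ ^ 2 ≤ γ ^ 2 * (L * ‖a‖) ^ 2 := by gcongr
      _ = γ * (γ * L ^ 2) * ‖a‖ ^ 2 := by ring
      _ ≤ γ * μ * ‖a‖ ^ 2 := by gcongr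
  rw [norm_sub_sq_real, real_inner_smul_right, real_inner_comm, norm_smul, mul_pow,
    Real.norm_eq_abs, sq_abs]
  nlinarith

theorem le_pow_mul_add_div_of_le_mul_add {V : ℕ → ℝ} {ρ c : ℝ} (hρ0 : 0 ≤ ρ) (hρ1 : ρ < 1)
    (hc : 0 ≤ c) (hV : ∀ n, V (n + 1) ≤ ρ * V n + c) (n : ℕ) :
    V n ≤ ρ ^ n * V 0 + c / (1 - ρ) := by
  have hfix : ρ * (c / (1 - ρ)) + c = c / (1 - ρ) := by
    field_simp [(sub_pos.2 hρ1).ne']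
    ring
  induction n with
  | zero => simpa using div_nonneg hc (sub_pos.2 hρ1).le
  | succ n ih =>
    calc V (n + 1) ≤ ρ * V n + c := hV n
      _ ≤ ρ * (ρ ^ n * V 0 + c / (1 - ρ)) + c := by gcongr
      _ = ρ ^ (n + 1) * V 0 + c / (1 - ρ) := by rw [pow_succ]; linear_combination hfix

section Expectation

variable {Ω E : Type*} [NormedAddCommGroup E] {m0 : MeasurableSpace Ω} {P : Measure Ω}

theorem integrable_norm_add_sq {u v : Ω → E} (hu : Integrable (fun ω => ‖u ω‖ ^ 2) P)
    (hv : Integrable (fun ω => ‖v ω‖ ^ 2) P) (huv : AEStronglyMeasurable (fun ω => u ω + v ω) P) :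
    Integrable (fun ω => ‖u ω + v ω‖ ^ 2) P := by
  refine ((hu.const_mul (1 + 1)).add (hv.const_mul (1 + 1⁻¹))).mono' (huv.norm.pow 2) ?_
  refine ae_of_all _ fun ω => ?_
  rw [Real.norm_of_nonneg (by positivity)]
  exact norm_add_sq_le_one_add_mul_add (u ω) (v ω) one_pos

theorem integral_norm_add_sq_le {u v : Ω → E} (hu : Integrable (fun ω => ‖u ω‖ ^ 2) P)
    (hv : Integrable (fun ω => ‖v ω‖ ^ 2) P) (huv : AEStronglyMeasurable (fun ω => u ω + v ω) P)
    {ε : ℝ} (hε : 0 < ε) :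
    ∫ ω, ‖u ω + v ω‖ ^ 2 ∂P ≤
      (1 + ε) * ∫ ω, ‖u ω‖ ^ 2 ∂P + (1 + ε⁻¹) * ∫ ω, ‖v ω‖ ^ 2 ∂P := by
  rw [← integral_const_mul, ← integral_const_mul,
    ← integral_add (hu.const_mul _) (hv.const_mul _)]
  exact integral_mono (integrable_norm_add_sq hu hv huv) ((hu.const_mul _).add (hv.const_mul _))
    fun ω => norm_add_sq_le_one_add_mul_add (u ω) (v ω) hε

variable [InnerProductSpace ℝ E] [CompleteSpace E] [IsFiniteMeasure P] {mF : MeasurableSpace Ω}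

theorem integral_inner_eq_zero_of_condExp_eq_zero (hle : mF ≤ m0) {g ξ : Ω → E}
    (hg : StronglyMeasurable[mF] g) (hgξ : Integrable (fun ω => ⟪g ω, ξ ω⟫_ℝ) P)
    (hξ : Integrable ξ P) (hmds : P[ξ|mF] =ᵐ[P] fun _ => 0) :
    ∫ ω, ⟪g ω, ξ ω⟫_ℝ ∂P = 0 := by
  have hpull : P[fun ω => ⟪g ω, ξ ω⟫_ℝ|mF] =ᵐ[P] fun ω => ⟪g ω, P[ξ|mF] ω⟫_ℝ :=
    condExp_bilin_of_stronglyMeasurable_left (innerSL ℝ) hg hgξ hξ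
  rw [← integral_condExp hle, integral_congr_ae hpull]
  refine integral_eq_zero_of_ae ?_
  filter_upwards [hmds] with ω hω
  simp [hω]

theorem integral_norm_sub_smul_sq_of_condExp_eq_zero (hle : mF ≤ m0) {g ξ : Ω → E}
    (hg : StronglyMeasurable[mF] g) (hg2 : Integrable (fun ω => ‖g ω‖ ^ 2) P)
    (hgξ : Integrable (fun ω => ⟪g ω, ξ ω⟫_ℝ) P) (hξ : MemLp ξ 2 P)
    (hmds : P[ξ|mF] =ᵐ[P] fun _ => 0) (c : ℝ) :
    ∫ ω, ‖g ω - c • ξ ω‖ ^ 2 ∂P = ∫ ω, ‖g ω‖ ^ 2 ∂P + c ^ 2 * ∫ ω, ‖ξ ω‖ ^ 2 ∂P := by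
  have hξ2 : Integrable (fun ω => ‖ξ ω‖ ^ 2) P :=
    (memLp_two_iff_integrable_sq_norm hξ.aestronglyMeasurable).mp hξ
  have hexpand : ∀ ω, ‖g ω - c • ξ ω‖ ^ 2
      = ‖g ω‖ ^ 2 - 2 * c * ⟪g ω, ξ ω⟫_ℝ + c ^ 2 * ‖ξ ω‖ ^ 2 := fun ω => by
    rw [norm_sub_sq_real, real_inner_smul_right, norm_smul, mul_pow, Real.norm_eq_abs, sq_abs]
    ring
  simp_rw [hexpand]
  rw [integral_add (f := fun ω => ‖g ω‖ ^ 2 - 2 * c * ⟪g ω, ξ ω⟫_ℝ)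
      (hg2.sub (hgξ.const_mul _)) (hξ2.const_mul _),
    integral_sub hg2 (hgξ.const_mul _), integral_const_mul, integral_const_mul,
    integral_inner_eq_zero_of_condExp_eq_zero hle hg hgξ (hξ.integrable one_le_two) hmds]
  ring

end Expectation

theorem stronglyMeasurable_apply_of_continuous_of_stronglyMeasurable {α ι β : Type*}
    {mα : MeasurableSpace α} [TopologicalSpace ι] [TopologicalSpace.MetrizableSpace ι]
    [MeasurableSpace ι] [SecondCountableTopology ι] [OpensMeasurableSpace ι] [TopologicalSpace β]
    [TopologicalSpace.PseudoMetrizableSpace β] {u : ι → α → β}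
    (hu_cont : ∀ a, Continuous fun i => u i a)
    (hu : ∀ i, StronglyMeasurable (u i)) {θ : α → ι} (hθ : Measurable θ) :
    StronglyMeasurable fun a => u (θ a) a :=
  (stronglyMeasurable_uncurry_of_continuous_of_stronglyMeasurable hu_cont hu).comp_measurable
    (hθ.prodMk measurable_id)

section SGDStep

variable {Ω E : Type*} [NormedAddCommGroup E] [InnerProductSpace ℝ E] [CompleteSpace E]
  [MeasurableSpace E] [BorelSpace E] [SecondCountableTopology E]
  {mF m0 : MeasurableSpace Ω} {P : Measure Ω} [IsFiniteMeasure P]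
  {f : E → Ω → E} {x x₀ x₁ ξ : Ω → E} {μ L γ : ℝ}

theorem integral_norm_sgd_step_sub_sq_le_one_sub_mul (hle : mF ≤ m0)
    (hγ : 0 ≤ γ) (hγL : γ * L ^ 2 ≤ μ) (hf_meas : ∀ y, StronglyMeasurable[mF] (f y))
    (hmono : ∀ ω y z, μ * ‖y - z‖ ^ 2 ≤ ⟪f y ω - f z ω, y - z⟫_ℝ)
    (hlip : ∀ ω y z, ‖f y ω - f z ω‖ ≤ L * ‖y - z‖)
    (hx : StronglyMeasurable[mF] x) (hx₁ : StronglyMeasurable[mF] x₁)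
    (hzero : ∀ᵐ ω ∂P, f (x₁ ω) ω = 0) (hξ : MemLp ξ 2 P) (hmds : P[ξ|mF] =ᵐ[P] fun _ => 0)
    (hdiff : Integrable (fun ω => ‖x ω - x₁ ω‖ ^ 2) P)
    (hinc : Integrable (fun ω => ⟪x ω - x₁ ω - γ • f (x ω) ω, ξ ω⟫_ℝ) P) :
    ∫ ω, ‖x ω - γ • f (x ω) ω - γ • ξ ω - x₁ ω‖ ^ 2 ∂P ≤
      (1 - γ * μ) * ∫ ω, ‖x ω - x₁ ω‖ ^ 2 ∂P + γ ^ 2 * ∫ ω, ‖ξ ω‖ ^ 2 ∂P := by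
  set g := fun ω => x ω - x₁ ω - γ • f (x ω) ω
  have hcont : ∀ ω, Continuous fun y => f y ω := fun ω =>
    (LipschitzWith.of_dist_le' fun y z => by
      simpa only [dist_eq_norm] using hlip ω y z).continuous
  have hfx : StronglyMeasurable[mF] fun ω => f (x ω) ω :=
    stronglyMeasurable_apply_of_continuous_of_stronglyMeasurable hcont hf_meas hx.measurable
  have hg : StronglyMeasurable[mF] g := (hx.sub hx₁).sub (hfx.const_smul γ)
  have hcontr : ∀ᵐ ω ∂P, ‖g ω‖ ^ 2 ≤ (1 - γ * μ) * ‖x ω - x₁ ω‖ ^ 2 := by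
    filter_upwards [hzero] with ω hω
    simpa [g, hω] using norm_sub_smul_sq_le hγ hγL (hmono ω (x ω) (x₁ ω)) (hlip ω _ _)
  have hg_int : Integrable (fun ω => ‖g ω‖ ^ 2) P := by
    refine (hdiff.const_mul (1 - γ * μ)).mono'
      ((hg.mono hle).aestronglyMeasurable.norm.pow 2) ?_
    filter_upwards [hcontr] with ω hω
    rwa [Real.norm_of_nonneg (by positivity)]
  have hnext : ∀ ω, x ω - γ • f (x ω) ω - γ • ξ ω - x₁ ω = g ω - γ • ξ ω := fun ω => by
    simp only [g]; abel
  simp_rw [hnext]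
  rw [integral_norm_sub_smul_sq_of_condExp_eq_zero hle hg hg_int hinc hξ hmds]
  gcongr ?_ + _
  exact (integral_mono_ae hg_int (hdiff.const_mul _) hcontr).trans_eq (integral_const_mul _ _)

theorem integral_norm_sgd_step_sub_sq_le (hle : mF ≤ m0) {Δ σ : ℝ} (hμ : 0 < μ)
    (hγ : 0 < γ) (hγL : γ * L ^ 2 ≤ μ) (hγμ : γ * μ ≤ 1)
    (hf_meas : ∀ y, StronglyMeasurable[mF] (f y))
    (hmono : ∀ ω y z, μ * ‖y - z‖ ^ 2 ≤ ⟪f y ω - f z ω, y - z⟫_ℝ)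
    (hlip : ∀ ω y z, ‖f y ω - f z ω‖ ≤ L * ‖y - z‖)
    (hx : StronglyMeasurable[mF] x) (hx₁ : StronglyMeasurable[mF] x₁)
    (hzero : ∀ᵐ ω ∂P, f (x₁ ω) ω = 0) (hξ : MemLp ξ 2 P) (hmds : P[ξ|mF] =ᵐ[P] fun _ => 0)
    (hdrift : ∫ ω, ‖x₀ ω - x₁ ω‖ ^ 2 ∂P ≤ Δ ^ 2) (hnoise : ∫ ω, ‖ξ ω‖ ^ 2 ∂P ≤ σ ^ 2)
    (herr : Integrable (fun ω => ‖x ω - x₀ ω‖ ^ 2) P)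
    (hdrift_int : Integrable (fun ω => ‖x₀ ω - x₁ ω‖ ^ 2) P)
    (hinc : Integrable (fun ω => ⟪x ω - x₁ ω - γ • f (x ω) ω, ξ ω⟫_ℝ) P) :
    ∫ ω, ‖x ω - γ • f (x ω) ω - γ • ξ ω - x₁ ω‖ ^ 2 ∂P ≤
      (1 - γ * μ / 2) * ∫ ω, ‖x ω - x₀ ω‖ ^ 2 ∂P + (2 * Δ ^ 2 / (γ * μ) + γ ^ 2 * σ ^ 2) := by
  set V := ∫ ω, ‖x ω - x₀ ω‖ ^ 2 ∂P
  have hsplit : ∀ ω, x ω - x₁ ω = (x ω - x₀ ω) + (x₀ ω - x₁ ω) := fun ω => by abel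
  have hdiff_meas : AEStronglyMeasurable (fun ω => (x ω - x₀ ω) + (x₀ ω - x₁ ω)) P := by
    have h : AEStronglyMeasurable (fun ω => x ω - x₁ ω) P :=
      ((hx.sub hx₁).mono hle).aestronglyMeasurable
    simpa only [hsplit] using h
  have hdiff_int : Integrable (fun ω => ‖x ω - x₁ ω‖ ^ 2) P := by
    simpa only [← hsplit] using integrable_norm_add_sq herr hdrift_int hdiff_meas
  have hdiff_le : ∫ ω, ‖x ω - x₁ ω‖ ^ 2 ∂P ≤
      (1 + γ * μ / 2) * V + (1 + (γ * μ / 2)⁻¹) * Δ ^ 2 := by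
    simp only [hsplit]
    refine (integral_norm_add_sq_le herr hdrift_int hdiff_meas
      (ε := γ * μ / 2) (by positivity)).trans ?_
    gcongr
  have hV : 0 ≤ V := integral_nonneg fun ω => by positivity
  have hΔcoef : (1 - γ * μ) * (1 + (γ * μ / 2)⁻¹) = 2 / (γ * μ) - 1 - γ * μ := by
    field_simp
    ring
  calc _ ≤ (1 - γ * μ) * ∫ ω, ‖x ω - x₁ ω‖ ^ 2 ∂P + γ ^ 2 * ∫ ω, ‖ξ ω‖ ^ 2 ∂P :=
        integral_norm_sgd_step_sub_sq_le_one_sub_mul hle hγ.le hγL hf_meas hmono hlip hx hx₁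
          hzero hξ hmds hdiff_int hinc
    _ ≤ (1 - γ * μ) * ((1 + γ * μ / 2) * V + (1 + (γ * μ / 2)⁻¹) * Δ ^ 2) + γ ^ 2 * σ ^ 2 := by
        gcongr
    _ ≤ _ := by
        have hΔterm : 2 / (γ * μ) * Δ ^ 2 = 2 * Δ ^ 2 / (γ * μ) := by ring
        rw [mul_add, ← mul_assoc, ← mul_assoc, hΔcoef]
        nlinarith [mul_nonneg (sq_nonneg (γ * μ)) hV,
          mul_nonneg (by positivity : (0 : ℝ) ≤ 1 + γ * μ) (sq_nonneg Δ)]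

end SGDStep

/-- Here `m t`, `ξ t`, `θstar (t+1)` play the roles of `m_{t+1}`, `ξ_{t+1}(θ_t)`, `θ⋆_{t+1}`
in the paper. -/
theorem sgd_tracking_error_expectation_general
    (d : ℕ) (μ L Δ σ : ℝ)
    (hμ : 0 < μ)
    {Ω : Type*} {m0 : MeasurableSpace Ω} (P : Measure Ω) [IsProbabilityMeasure P]
    (ℱ : Filtration ℕ m0)
    (m : ℕ → EuclideanSpace ℝ (Fin d) → Ω → EuclideanSpace ℝ (Fin d))
    (θ θstar ξ : ℕ → Ω → EuclideanSpace ℝ (Fin d))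
    (θ0 θstar0 : EuclideanSpace ℝ (Fin d))
    (hθ0 : θ 0 = fun _ => θ0) (hθstar0 : θstar 0 = fun _ => θstar0)
    (hm_meas : ∀ t x, StronglyMeasurable[ℱ t] (m t x))
    (hmono : ∀ t ω x y, μ * ‖x - y‖ ^ 2 ≤ ⟪m t x ω - m t y ω, x - y⟫_ℝ)
    (hlip : ∀ t ω x y, ‖m t x ω - m t y ω‖ ≤ L * ‖x - y‖)
    (hθstar_meas : ∀ t, StronglyMeasurable[ℱ t] (θstar (t + 1)))
    (hzero : ∀ t, ∀ᵐ ω ∂P, m t (θstar (t + 1) ω) ω = 0)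
    (hadapted : ∀ t, StronglyMeasurable[ℱ t] (θ t))
    (γ : ℝ) (hγ0 : 0 < γ) (hγ : γ ≤ min (μ / L ^ 2) (1 / L))
    (hupd : ∀ t ω, θ (t + 1) ω = θ t ω - γ • m t (θ t ω) ω - γ • ξ t ω)
    (hξ_L2 : ∀ t, MemLp (ξ t) 2 P)
    (hξ_mds : ∀ t, P[ξ t | ℱ t] =ᵐ[P] fun _ => 0)
    (hdrift : ∀ t, ∫ ω, ‖θstar t ω - θstar (t + 1) ω‖ ^ 2 ∂P ≤ Δ ^ 2)
    (hnoise : ∀ t, ∫ ω, ‖ξ t ω‖ ^ 2 ∂P ≤ σ ^ 2)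
    (hint_err : ∀ t, Integrable (fun ω => ‖θ t ω - θstar t ω‖ ^ 2) P)
    (hint_drift : ∀ t, Integrable (fun ω => ‖θstar t ω - θstar (t + 1) ω‖ ^ 2) P)
    (hint_inc : ∀ t, Integrable
      (fun ω => ⟪θ t ω - θstar (t + 1) ω - γ • m t (θ t ω) ω, ξ t ω⟫_ℝ) P) :
    ∀ t : ℕ,
      ∫ ω, ‖θ (t + 1) ω - θstar (t + 1) ω‖ ^ 2 ∂P ≤
        (1 - γ * μ / 2) ^ (t + 1) * ‖θ0 - θstar0‖ ^ 2
          + 4 * Δ ^ 2 / (γ ^ 2 * μ ^ 2) + 2 * σ ^ 2 * γ / μ := by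
  intro t
  rcases subsingleton_or_nontrivial (EuclideanSpace ℝ (Fin d)) with hE | hE
  · simp only [Subsingleton.elim _ (0 : EuclideanSpace ℝ (Fin d)), norm_zero, ne_eq,
      OfNat.ofNat_ne_zero, not_false_eq_true, zero_pow, integral_zero, mul_zero, zero_add]
    positivity
  have hL : 0 < L := one_div_pos.mp (hγ0.trans_le (hγ.trans (min_le_right _ _)))
  have hγL : γ * L ^ 2 ≤ μ := (le_div_iff₀ (by positivity)).mp (hγ.trans (min_le_left _ _))
  have hμL : μ ≤ L := by
    obtain ⟨ω⟩ := nonempty_of_isProbabilityMeasure P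
    exact le_of_strongly_monotone_of_lipschitz (hmono 0 ω) (hlip 0 ω)
  have hγμ : γ * μ ≤ 1 :=
    calc γ * μ ≤ 1 / L * L := mul_le_mul (hγ.trans (min_le_right _ _)) hμL hμ.le (by positivity)
      _ = 1 := one_div_mul_cancel hL.ne'
  have hstep : ∀ s, ∫ ω, ‖θ (s + 1) ω - θstar (s + 1) ω‖ ^ 2 ∂P ≤
      (1 - γ * μ / 2) * ∫ ω, ‖θ s ω - θstar s ω‖ ^ 2 ∂P
        + (2 * Δ ^ 2 / (γ * μ) + γ ^ 2 * σ ^ 2) := fun s => by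
    simp only [hupd]
    exact integral_norm_sgd_step_sub_sq_le (ℱ.le s) hμ hγ0 hγL hγμ (hm_meas s) (hmono s) (hlip s)
      (hadapted s) (hθstar_meas s) (hzero s) (hξ_L2 s) (hξ_mds s) (hdrift s) (hnoise s)
      (hint_err s) (hint_drift s) (hint_inc s)
  have hbound := le_pow_mul_add_div_of_le_mul_add (V := fun s => ∫ ω, ‖θ s ω - θstar s ω‖ ^ 2 ∂P)
    (by linarith) (by linarith [mul_pos hγ0 hμ]) (by positivity) hstep (t + 1)
  simp only [hθ0, hθstar0, integral_const, probReal_univ, one_smul] at hbound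
  convert hbound using 1
  field_simp
  ring

/-- Tracking error bound in expectation for nonstationary SGD: exponentially decaying
transient plus irreducible drift and noise floors. Here `m t`, `ξ t`, `θstar (t+1)`
play the roles of `m_{t+1}`, `ξ_{t+1}(θ_t)`, `θ⋆_{t+1}` in the paper. -/
theorem sgd_tracking_error_expectation
    (d : ℕ) (hd : 1 ≤ d) (μ L Δ σ : ℝ)
    (hμ : 0 < μ) (hL : 0 < L) (hΔ : 0 < Δ) (hσ : 0 < σ)
    {Ω : Type*} {m0 : MeasurableSpace Ω} (P : Measure Ω) [IsProbabilityMeasure P]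
    (ℱ : Filtration ℕ m0)
    (m : ℕ → EuclideanSpace ℝ (Fin d) → Ω → EuclideanSpace ℝ (Fin d))
    (θ θstar ξ : ℕ → Ω → EuclideanSpace ℝ (Fin d))
    (θ0 θstar0 : EuclideanSpace ℝ (Fin d))
    (hθ0 : θ 0 = fun _ => θ0) (hθstar0 : θstar 0 = fun _ => θstar0)
    (hm_meas : ∀ t x, StronglyMeasurable[ℱ t] (m t x))
    (hmono : ∀ t ω x y, μ * ‖x - y‖ ^ 2 ≤ ⟪m t x ω - m t y ω, x - y⟫_ℝ)
    (hlip : ∀ t ω x y, ‖m t x ω - m t y ω‖ ≤ L * ‖x - y‖)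
    (hθstar_meas : ∀ t, StronglyMeasurable[ℱ t] (θstar (t + 1)))
    (hzero : ∀ t, ∀ᵐ ω ∂P, m t (θstar (t + 1) ω) ω = 0)
    (hadapted : ∀ t, StronglyMeasurable[ℱ t] (θ t))
    (γ : ℝ) (hγ0 : 0 < γ) (hγ : γ ≤ min (μ / L ^ 2) (1 / L))
    (hupd : ∀ t ω, θ (t + 1) ω = θ t ω - γ • m t (θ t ω) ω - γ • ξ t ω)
    (hξ_meas : ∀ t, StronglyMeasurable[ℱ (t + 1)] (ξ t))
    (hξ_L2 : ∀ t, MemLp (ξ t) 2 P)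
    (hξ_mds : ∀ t, P[ξ t | ℱ t] =ᵐ[P] fun _ => 0)
    (hdrift : ∀ t, ∫ ω, ‖θstar t ω - θstar (t + 1) ω‖ ^ 2 ∂P ≤ Δ ^ 2)
    (hnoise : ∀ t, ∫ ω, ‖ξ t ω‖ ^ 2 ∂P ≤ σ ^ 2)
    (hint_err : ∀ t, Integrable (fun ω => ‖θ t ω - θstar t ω‖ ^ 2) P)
    (hint_drift : ∀ t, Integrable (fun ω => ‖θstar t ω - θstar (t + 1) ω‖ ^ 2) P)
    (hint_inc : ∀ t, Integrable
      (fun ω => ⟪θ t ω - θstar (t + 1) ω - γ • m t (θ t ω) ω, ξ t ω⟫_ℝ) P) :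
    ∀ t : ℕ,
      ∫ ω, ‖θ (t + 1) ω - θstar (t + 1) ω‖ ^ 2 ∂P ≤
        (1 - γ * μ / 2) ^ (t + 1) * ‖θ0 - θstar0‖ ^ 2
          + 4 * Δ ^ 2 / (γ ^ 2 * μ ^ 2) + 2 * σ ^ 2 * γ / μ :=
  sgd_tracking_error_expectation_general d μ L Δ σ hμ P ℱ m θ θstar ξ θ0 θstar0 hθ0 hθstar0 hm_meas
    hmono hlip hθstar_meas hzero hadapted γ hγ0 hγ hupd hξ_L2 hξ_mds hdrift hnoise hint_err
    hint_drift hint_inc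
end

section
/- In the setting of the expected tracking error bound for nonstationary SGD (filtered probability space; m_{t+1} uniformly μ-strongly monotone and L-Lipschitz with 𝓕_t-measurable values; 𝓕_t-measurable minimizers θ⋆_{t+1} with m_{t+1}(θ⋆_{t+1}) = 0; martingale-difference gradient noise with 𝔼[‖ξ_{t+1}(θ_t)‖²] ≤ σ²; drift with 𝔼[‖θ⋆_t − θ⋆_{t+1}‖²] ≤ Δ²), define 𝓔(γ) := σ²γ/μ + 4Δ²/(μ²γ²) for γ ∈ (0, 1/(2L)], and let γ⋆ be a minimizer of 𝓔 over (0, 1/(2L)], with 𝓔 := 𝓔(γ⋆). Assume in addition γ⋆ ≤ min{μ/L², 1/L}. If the algorithm is run with constant stepsize γ_t ≡ γ⋆, then for every t ≥ (2/(μγ⋆)) · log(‖θ₀ − θ⋆₀‖²/𝓔) one has 𝔼‖θ_{t+1} − θ⋆_{t+1}‖² ≤ 3𝓔. -/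
/-! With a constant stepsize `γ`, the drift-corrected mean step `θ - θ⋆ₜ₊₁ - γ mₜ₊₁(θ)` is
`𝓕ₜ`-measurable and, by strong monotonicity and Lipschitz continuity, shrinks `‖θ - θ⋆ₜ₊₁‖²` by the
factor `1 - μγ`; the martingale-difference noise is orthogonal to it in `L²`, and Young's
inequality with weight `μγ/2` separates the drift. Hence the expected error `eₜ` satisfies
`eₜ₊₁ ≤ (1 - μγ/2) eₜ + γ²σ² + 3Δ²/(μγ)`, so `eₜ ≤ (1 - μγ/2)ᵗ e₀ + 2σ²γ/μ + 6Δ²/(μ²γ²)`.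
At `γ = γ⋆` the stationary part is at most `2𝓔`, and the transient part is at most
`exp(-μγ⋆(t+1)/2) e₀ ≤ 𝓔` once `t` exceeds the burn-in time. -/

open MeasureTheory
open scoped InnerProductSpace

section Deterministic

variable {E : Type*} [NormedAddCommGroup E] [InnerProductSpace ℝ E]

theorem norm_add_sq_le_of_pos_s3 (u v : E) {c : ℝ} (hc : 0 < c) :
    ‖u + v‖ ^ 2 ≤ (1 + c) * ‖u‖ ^ 2 + (1 + 1 / c) * ‖v‖ ^ 2 := by
  have hcross : 2 * ‖u‖ * ‖v‖ ≤ c * ‖u‖ ^ 2 + 1 / c * ‖v‖ ^ 2 := by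
    have h := div_nonneg (sq_nonneg (c * ‖u‖ - ‖v‖)) hc.le
    have hexp : (c * ‖u‖ - ‖v‖) ^ 2 / c = c * ‖u‖ ^ 2 + 1 / c * ‖v‖ ^ 2 - 2 * ‖u‖ * ‖v‖ := by
      field_simp
      ring
    linarith
  nlinarith [norm_add_sq_real u v, real_inner_le_norm u v]

theorem norm_sub_smul_sq_le_of_inner_ge {u v : E} {μ L γ : ℝ}
    (hmono : μ * ‖u‖ ^ 2 ≤ ⟪v, u⟫_ℝ) (hlip : ‖v‖ ≤ L * ‖u‖) (hγ : 0 ≤ γ)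
    (hγL : γ * L ^ 2 ≤ μ) :
    ‖u - γ • v‖ ^ 2 ≤ (1 - μ * γ) * ‖u‖ ^ 2 := by
  have hv : ‖v‖ ^ 2 ≤ L ^ 2 * ‖u‖ ^ 2 := by
    simpa [mul_pow] using pow_le_pow_left₀ (norm_nonneg v) hlip 2
  have hexp : ‖u - γ • v‖ ^ 2 = ‖u‖ ^ 2 - 2 * γ * ⟪v, u⟫_ℝ + γ ^ 2 * ‖v‖ ^ 2 := by
    rw [norm_sub_sq_real, real_inner_smul_right, norm_smul, real_inner_comm, mul_pow,
      Real.norm_eq_abs, sq_abs]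
    ring
  rw [hexp]
  nlinarith [mul_le_mul_of_nonneg_left hmono hγ, mul_le_mul_of_nonneg_left hv (sq_nonneg γ),
    mul_le_mul_of_nonneg_right hγL (mul_nonneg hγ (sq_nonneg ‖u‖))]

theorem le_of_inner_sub_ge_of_norm_sub_le [Nontrivial E] {F : E → E} {μ L : ℝ}
    (hmono : ∀ x y, μ * ‖x - y‖ ^ 2 ≤ ⟪F x - F y, x - y⟫_ℝ)
    (hlip : ∀ x y, ‖F x - F y‖ ≤ L * ‖x - y‖) : μ ≤ L := by
  obtain ⟨x, hx⟩ := exists_ne (0 : E)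
  have hx2 : 0 < ‖x‖ ^ 2 := by positivity
  have h := (hmono x 0).trans ((real_inner_le_norm _ _).trans
    (mul_le_mul_of_nonneg_right (hlip x 0) (norm_nonneg _)))
  rw [sub_zero] at h
  nlinarith

end Deterministic

theorem le_pow_mul_add_div_of_le_mul_add_s3 {u : ℕ → ℝ} {ρ b : ℝ} (hρ : 0 < ρ) (hρ1 : ρ ≤ 1)
    (hb : 0 ≤ b) (hu : ∀ n, u (n + 1) ≤ (1 - ρ) * u n + b) (n : ℕ) :
    u n ≤ (1 - ρ) ^ n * u 0 + b / ρ := by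
  induction n with
  | zero => simpa using div_nonneg hb hρ.le
  | succ n ih =>
    calc u (n + 1) ≤ (1 - ρ) * ((1 - ρ) ^ n * u 0 + b / ρ) + b :=
          (hu n).trans (by gcongr)
      _ = (1 - ρ) ^ (n + 1) * u 0 + b / ρ := by field_simp; ring

theorem one_sub_pow_mul_le_of_log_div_le {ρ a E : ℝ} {n : ℕ} (hρ : ρ ≤ 1) (ha : 0 ≤ a)
    (hE : 0 < E) (hn : Real.log (a / E) ≤ ρ * n) : (1 - ρ) ^ n * a ≤ E := by
  rcases ha.eq_or_lt with rfl | ha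
  · simpa using hE.le
  calc (1 - ρ) ^ n * a ≤ Real.exp (-ρ) ^ n * a :=
        mul_le_mul_of_nonneg_right
          (pow_le_pow_left₀ (by linarith) (Real.one_sub_le_exp_neg ρ) n) ha.le
    _ = Real.exp (-(ρ * n)) * a := by rw [← Real.exp_nat_mul]; ring_nf
    _ ≤ Real.exp (-Real.log (a / E)) * a := by gcongr
    _ = E := by
        rw [Real.exp_neg, Real.exp_log (by positivity)]
        field_simp

open TopologicalSpace in
theorem stronglyMeasurable_apply_of_continuous_of_stronglyMeasurable_s3 {E β Ω : Type*}
    [TopologicalSpace E] [MetrizableSpace E] [SecondCountableTopology E] [MeasurableSpace E]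
    [OpensMeasurableSpace E] [TopologicalSpace β] [PseudoMetrizableSpace β]
    {mΩ : MeasurableSpace Ω} {F : E → Ω → β} (hcont : ∀ ω, Continuous fun x => F x ω)
    (hmeas : ∀ x, StronglyMeasurable (F x)) {θ : Ω → E} (hθ : Measurable θ) :
    StronglyMeasurable fun ω => F (θ ω) ω :=
  (stronglyMeasurable_uncurry_of_continuous_of_stronglyMeasurable hcont hmeas).comp_measurable
    (hθ.prodMk measurable_id)

namespace MeasureTheory

variable {E Ω : Type*} [NormedAddCommGroup E] {mΩ : MeasurableSpace Ω} {P : Measure Ω}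

theorem MemLp.integrable_norm_sq {f : Ω → E} (hf : MemLp f 2 P) :
    Integrable (fun ω => ‖f ω‖ ^ 2) P :=
  (memLp_two_iff_integrable_sq_norm hf.1).1 hf

theorem MemLp.sub_add_sub_cancel {p : ENNReal} {u v w : Ω → E}
    (huv : MemLp (fun ω => u ω - v ω) p P) (hvw : MemLp (fun ω => v ω - w ω) p P) :
    MemLp (fun ω => u ω - w ω) p P := by
  convert huv.add hvw using 1
  funext ω
  simp only [Pi.add_apply, _root_.sub_add_sub_cancel]

variable [InnerProductSpace ℝ E]

theorem MemLp.integrable_inner {f g : Ω → E} (hf : MemLp f 2 P) (hg : MemLp g 2 P) :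
    Integrable (fun ω => ⟪f ω, g ω⟫_ℝ) P :=
  (L2.integrable_inner (𝕜 := ℝ) (hf.toLp f) (hg.toLp g)).congr <| by
    filter_upwards [hf.coeFn_toLp, hg.coeFn_toLp] with ω hfω hgω
    rw [hfω, hgω]

theorem integral_norm_add_sq_le {u v : Ω → E} (hu : MemLp u 2 P) (hv : MemLp v 2 P) {c : ℝ}
    (hc : 0 < c) :
    ∫ ω, ‖u ω + v ω‖ ^ 2 ∂P
      ≤ (1 + c) * ∫ ω, ‖u ω‖ ^ 2 ∂P + (1 + 1 / c) * ∫ ω, ‖v ω‖ ^ 2 ∂P := by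
  have hu2 := hu.integrable_norm_sq.const_mul (1 + c)
  have hv2 := hv.integrable_norm_sq.const_mul (1 + 1 / c)
  rw [← integral_const_mul, ← integral_const_mul, ← integral_add hu2 hv2]
  exact integral_mono (hu.add hv).integrable_norm_sq (hu2.add hv2)
    fun ω => norm_add_sq_le_of_pos_s3 (u ω) (v ω) hc

variable [CompleteSpace E] {m : MeasurableSpace Ω} [IsFiniteMeasure P]

theorem integral_inner_eq_zero_of_condExp_eq_zero (hm : m ≤ mΩ) {a ξ : Ω → E}
    (ha : StronglyMeasurable[m] a) (haξ : Integrable (fun ω => ⟪a ω, ξ ω⟫_ℝ) P)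
    (hξ : Integrable ξ P) (hξm : P[ξ|m] =ᵐ[P] 0) :
    ∫ ω, ⟪a ω, ξ ω⟫_ℝ ∂P = 0 := by
  have hpull : P[fun ω => ⟪a ω, ξ ω⟫_ℝ|m] =ᵐ[P] fun ω => ⟪a ω, P[ξ|m] ω⟫_ℝ :=
    condExp_bilin_of_stronglyMeasurable_left (innerSL ℝ) ha haξ hξ
  have hzero : P[fun ω => ⟪a ω, ξ ω⟫_ℝ|m] =ᵐ[P] 0 := by
    filter_upwards [hpull, hξm] with ω hpullω hξω
    simp [hpullω, hξω]
  rw [← integral_condExp hm, integral_congr_ae hzero, integral_zero']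

theorem integral_norm_sub_smul_sq_of_condExp_eq_zero (hm : m ≤ mΩ) {a ξ : Ω → E}
    (ha : StronglyMeasurable[m] a) (ha2 : MemLp a 2 P) (hξ2 : MemLp ξ 2 P)
    (hξm : P[ξ|m] =ᵐ[P] 0) (γ : ℝ) :
    ∫ ω, ‖a ω - γ • ξ ω‖ ^ 2 ∂P = ∫ ω, ‖a ω‖ ^ 2 ∂P + γ ^ 2 * ∫ ω, ‖ξ ω‖ ^ 2 ∂P := by
  have hexpand : ∀ ω, ‖a ω - γ • ξ ω‖ ^ 2
      = ‖a ω‖ ^ 2 - 2 * γ * ⟪a ω, ξ ω⟫_ℝ + γ ^ 2 * ‖ξ ω‖ ^ 2 := fun ω => by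
    rw [norm_sub_sq_real, real_inner_smul_right, norm_smul, mul_pow, Real.norm_eq_abs, sq_abs]
    ring
  have hcross := ha2.integrable_inner hξ2
  have hcross' : Integrable (fun ω => 2 * γ * ⟪a ω, ξ ω⟫_ℝ) P := hcross.const_mul _
  have hnoise : Integrable (fun ω => γ ^ 2 * ‖ξ ω‖ ^ 2) P := hξ2.integrable_norm_sq.const_mul _
  have hmain : Integrable (fun ω => ‖a ω‖ ^ 2 - 2 * γ * ⟪a ω, ξ ω⟫_ℝ) P :=
    ha2.integrable_norm_sq.sub hcross'
  simp_rw [hexpand]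
  rw [integral_add hmain hnoise,
    integral_sub ha2.integrable_norm_sq hcross', integral_const_mul, integral_const_mul,
    integral_inner_eq_zero_of_condExp_eq_zero hm ha hcross (hξ2.integrable one_le_two) hξm]
  ring

end MeasureTheory

section SGDStep

variable {E Ω : Type*} [NormedAddCommGroup E] [InnerProductSpace ℝ E] {mF mΩ : MeasurableSpace Ω}
  {P : Measure Ω} {F : E → Ω → E} {θ θ' w w' ξ : Ω → E} {μ L γ : ℝ}

theorem ae_norm_sgd_mean_step_sq_le
    (hmono : ∀ ω x y, μ * ‖x - y‖ ^ 2 ≤ ⟪F x ω - F y ω, x - y⟫_ℝ)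
    (hlip : ∀ ω x y, ‖F x ω - F y ω‖ ≤ L * ‖x - y‖) (hγ : 0 ≤ γ) (hγL : γ * L ^ 2 ≤ μ)
    (hzero : ∀ᵐ ω ∂P, F (w' ω) ω = 0) :
    ∀ᵐ ω ∂P, ‖θ ω - w' ω - γ • F (θ ω) ω‖ ^ 2 ≤ (1 - μ * γ) * ‖θ ω - w' ω‖ ^ 2 := by
  filter_upwards [hzero] with ω hω
  simpa [hω] using norm_sub_smul_sq_le_of_inner_ge (hmono ω (θ ω) (w' ω))
    (hlip ω (θ ω) (w' ω)) hγ hγL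

theorem memLp_sgd_mean_step
    (hmono : ∀ ω x y, μ * ‖x - y‖ ^ 2 ≤ ⟪F x ω - F y ω, x - y⟫_ℝ)
    (hlip : ∀ ω x y, ‖F x ω - F y ω‖ ≤ L * ‖x - y‖) (hγ : 0 ≤ γ) (hγL : γ * L ^ 2 ≤ μ)
    (hzero : ∀ᵐ ω ∂P, F (w' ω) ω = 0) (hFθ : AEStronglyMeasurable (fun ω => F (θ ω) ω) P)
    (hθw' : MemLp (fun ω => θ ω - w' ω) 2 P) :
    MemLp (fun ω => θ ω - w' ω - γ • F (θ ω) ω) 2 P := by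
  have hμγ : 0 ≤ μ * γ := mul_nonneg ((mul_nonneg hγ (sq_nonneg L)).trans hγL) hγ
  refine hθw'.of_le (hθw'.1.sub (hFθ.const_smul γ)) ?_
  filter_upwards [ae_norm_sgd_mean_step_sq_le (θ := θ) hmono hlip hγ hγL hzero] with ω hω
  rw [← pow_le_pow_iff_left₀ (norm_nonneg _) (norm_nonneg _) two_ne_zero]
  nlinarith [sq_nonneg ‖θ ω - w' ω‖]

theorem memLp_sgd_step
    (hmono : ∀ ω x y, μ * ‖x - y‖ ^ 2 ≤ ⟪F x ω - F y ω, x - y⟫_ℝ)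
    (hlip : ∀ ω x y, ‖F x ω - F y ω‖ ≤ L * ‖x - y‖) (hγ : 0 ≤ γ) (hγL : γ * L ^ 2 ≤ μ)
    (hzero : ∀ᵐ ω ∂P, F (w' ω) ω = 0) (hFθ : AEStronglyMeasurable (fun ω => F (θ ω) ω) P)
    (hupd : ∀ ω, θ' ω = θ ω - γ • F (θ ω) ω - γ • ξ ω) (hξ : MemLp ξ 2 P)
    (herr : MemLp (fun ω => θ ω - w ω) 2 P) (hdrift : MemLp (fun ω => w ω - w' ω) 2 P) :
    MemLp (fun ω => θ' ω - w' ω) 2 P := by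
  have := (memLp_sgd_mean_step hmono hlip hγ hγL hzero hFθ (herr.sub_add_sub_cancel hdrift)).sub
    (hξ.const_smul γ)
  convert this using 2 with ω
  simp only [hupd, Pi.sub_apply, Pi.smul_apply]
  abel

variable [CompleteSpace E] [IsFiniteMeasure P]

theorem integral_sgd_step_le (hm : mF ≤ mΩ) (hμ : 0 < μ) (hγ : 0 < γ) (hγL : γ * L ^ 2 ≤ μ)
    (hμγ : μ * γ ≤ 1)
    (hmono : ∀ ω x y, μ * ‖x - y‖ ^ 2 ≤ ⟪F x ω - F y ω, x - y⟫_ℝ)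
    (hlip : ∀ ω x y, ‖F x ω - F y ω‖ ≤ L * ‖x - y‖)
    (hzero : ∀ᵐ ω ∂P, F (w' ω) ω = 0) (hθ : StronglyMeasurable[mF] θ)
    (hw' : StronglyMeasurable[mF] w') (hFθ : StronglyMeasurable[mF] fun ω => F (θ ω) ω)
    (hupd : ∀ ω, θ' ω = θ ω - γ • F (θ ω) ω - γ • ξ ω) (hξ : MemLp ξ 2 P)
    (hξm : P[ξ|mF] =ᵐ[P] 0)
    (herr : MemLp (fun ω => θ ω - w ω) 2 P) (hdrift : MemLp (fun ω => w ω - w' ω) 2 P) :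
    ∫ ω, ‖θ' ω - w' ω‖ ^ 2 ∂P ≤ (1 - μ * γ / 2) * ∫ ω, ‖θ ω - w ω‖ ^ 2 ∂P
      + γ ^ 2 * ∫ ω, ‖ξ ω‖ ^ 2 ∂P + 3 / (μ * γ) * ∫ ω, ‖w ω - w' ω‖ ^ 2 ∂P := by
  have hθw' := herr.sub_add_sub_cancel hdrift
  have hmean :=
    memLp_sgd_mean_step hmono hlip hγ.le hγL hzero (hFθ.mono hm).aestronglyMeasurable hθw'
  have hsplit : ∀ ω, θ' ω - w' ω = (θ ω - w' ω - γ • F (θ ω) ω) - γ • ξ ω := fun ω => by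
    rw [hupd]
    abel
  have hμγ0 : 0 < μ * γ := mul_pos hμ hγ
  set e := ∫ ω, ‖θ ω - w ω‖ ^ 2 ∂P
  set D := ∫ ω, ‖w ω - w' ω‖ ^ 2 ∂P
  have he : 0 ≤ e := integral_nonneg fun ω => sq_nonneg _
  have hD : 0 ≤ D := integral_nonneg fun ω => sq_nonneg _
  have hcoef_e : (1 - μ * γ) * (1 + μ * γ / 2) ≤ 1 - μ * γ / 2 := by nlinarith
  have hcoef_D : (1 - μ * γ) * (1 + 1 / (μ * γ / 2)) ≤ 3 / (μ * γ) := by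
    field_simp
    nlinarith
  calc ∫ ω, ‖θ' ω - w' ω‖ ^ 2 ∂P
      = ∫ ω, ‖θ ω - w' ω - γ • F (θ ω) ω‖ ^ 2 ∂P + γ ^ 2 * ∫ ω, ‖ξ ω‖ ^ 2 ∂P := by
        simp_rw [hsplit]
        exact integral_norm_sub_smul_sq_of_condExp_eq_zero hm
          ((hθ.sub hw').sub (hFθ.const_smul γ)) hmean hξ hξm γ
    _ ≤ (1 - μ * γ) * ∫ ω, ‖θ ω - w' ω‖ ^ 2 ∂P + γ ^ 2 * ∫ ω, ‖ξ ω‖ ^ 2 ∂P := by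
        gcongr ?_ + _
        exact (integral_mono_ae hmean.integrable_norm_sq (hθw'.integrable_norm_sq.const_mul _)
          (ae_norm_sgd_mean_step_sq_le hmono hlip hγ.le hγL hzero)).trans_eq
          (integral_const_mul _ _)
    _ ≤ (1 - μ * γ) * ((1 + μ * γ / 2) * e + (1 + 1 / (μ * γ / 2)) * D)
          + γ ^ 2 * ∫ ω, ‖ξ ω‖ ^ 2 ∂P := by
        gcongr ?_ + _
        refine mul_le_mul_of_nonneg_left ?_ (by linarith)
        simpa using integral_norm_add_sq_le herr hdrift (half_pos hμγ0)
    _ ≤ (1 - μ * γ / 2) * e + γ ^ 2 * ∫ ω, ‖ξ ω‖ ^ 2 ∂P + 3 / (μ * γ) * D := by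
        nlinarith [mul_le_mul_of_nonneg_right hcoef_e he, mul_le_mul_of_nonneg_right hcoef_D hD]

end SGDStep

theorem sgd_tracking_error_le {E Ω : Type*} [NormedAddCommGroup E] [InnerProductSpace ℝ E]
    [CompleteSpace E] [MeasurableSpace E] [BorelSpace E] [SecondCountableTopology E]
    {mΩ : MeasurableSpace Ω} {P : Measure Ω} [IsFiniteMeasure P] (ℱ : Filtration ℕ mΩ)
    {F : ℕ → E → Ω → E} {θ θstar ξ : ℕ → Ω → E} {μ L γ σ Δ : ℝ}
    (hμ : 0 < μ) (hγ : 0 < γ) (hγL : γ * L ^ 2 ≤ μ) (hμγ : μ * γ ≤ 1)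
    (hF_meas : ∀ t x, StronglyMeasurable[ℱ t] (F t x))
    (hmono : ∀ t ω x y, μ * ‖x - y‖ ^ 2 ≤ ⟪F t x ω - F t y ω, x - y⟫_ℝ)
    (hlip : ∀ t ω x y, ‖F t x ω - F t y ω‖ ≤ L * ‖x - y‖)
    (hθstar_meas : ∀ t, StronglyMeasurable[ℱ t] (θstar (t + 1)))
    (hθstar0 : AEStronglyMeasurable (θstar 0) P)
    (hzero : ∀ t, ∀ᵐ ω ∂P, F t (θstar (t + 1) ω) ω = 0)
    (hθ_meas : ∀ t, StronglyMeasurable[ℱ t] (θ t))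
    (hupd : ∀ t ω, θ (t + 1) ω = θ t ω - γ • F t (θ t ω) ω - γ • ξ t ω)
    (hξ : ∀ t, MemLp (ξ t) 2 P) (hξm : ∀ t, P[ξ t|ℱ t] =ᵐ[P] 0)
    (hdrift : ∀ t, ∫ ω, ‖θstar t ω - θstar (t + 1) ω‖ ^ 2 ∂P ≤ Δ ^ 2)
    (hnoise : ∀ t, ∫ ω, ‖ξ t ω‖ ^ 2 ∂P ≤ σ ^ 2)
    (hdrift_int : ∀ t, Integrable (fun ω => ‖θstar t ω - θstar (t + 1) ω‖ ^ 2) P)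
    (herr0 : MemLp (fun ω => θ 0 ω - θstar 0 ω) 2 P) (n : ℕ) :
    ∫ ω, ‖θ n ω - θstar n ω‖ ^ 2 ∂P ≤ (1 - μ * γ / 2) ^ n * ∫ ω, ‖θ 0 ω - θstar 0 ω‖ ^ 2 ∂P
      + (2 * σ ^ 2 * γ / μ + 6 * Δ ^ 2 / (μ ^ 2 * γ ^ 2)) := by
  have hθstar : ∀ t, AEStronglyMeasurable (θstar t) P
    | 0 => hθstar0
    | t + 1 => ((hθstar_meas t).mono (ℱ.le t)).aestronglyMeasurable
  have hdrift2 : ∀ t, MemLp (fun ω => θstar t ω - θstar (t + 1) ω) 2 P := fun t =>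
    (memLp_two_iff_integrable_sq_norm ((hθstar t).sub (hθstar (t + 1)))).2 (hdrift_int t)
  have hFθ : ∀ t, StronglyMeasurable[ℱ t] fun ω => F t (θ t ω) ω := fun t =>
    stronglyMeasurable_apply_of_continuous_of_stronglyMeasurable_s3
      (fun ω => (LipschitzWith.of_dist_le' fun x y => by
        simpa only [dist_eq_norm] using hlip t ω x y).continuous)
      (hF_meas t) (hθ_meas t).measurable
  have herr : ∀ t, MemLp (fun ω => θ t ω - θstar t ω) 2 P := by
    intro t
    induction t with
    | zero => exact herr0
    | succ t ih =>
      exact memLp_sgd_step (hmono t) (hlip t) hγ.le hγL (hzero t)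
        ((hFθ t).mono (ℱ.le t)).aestronglyMeasurable (hupd t) (hξ t) ih (hdrift2 t)
  have hstep : ∀ t, ∫ ω, ‖θ (t + 1) ω - θstar (t + 1) ω‖ ^ 2 ∂P
      ≤ (1 - μ * γ / 2) * ∫ ω, ‖θ t ω - θstar t ω‖ ^ 2 ∂P
        + (γ ^ 2 * σ ^ 2 + 3 / (μ * γ) * Δ ^ 2) := fun t => by
    refine (integral_sgd_step_le (ℱ.le t) hμ hγ hγL hμγ (hmono t) (hlip t) (hzero t)
      (hθ_meas t) (hθstar_meas t) (hFθ t) (hupd t) (hξ t) (hξm t) (herr t) (hdrift2 t)).trans ?_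
    rw [add_assoc]
    gcongr
    · exact hnoise t
    · exact hdrift t
  have hρ : 0 < μ * γ / 2 := by positivity
  have hb : 0 ≤ γ ^ 2 * σ ^ 2 + 3 / (μ * γ) * Δ ^ 2 := by positivity
  convert le_pow_mul_add_div_of_le_mul_add_s3 (u := fun t => ∫ ω, ‖θ t ω - θstar t ω‖ ^ 2 ∂P)
    hρ (by linarith) hb hstep n using 2
  field_simp
  ring

theorem sgd_time_to_track_expectation_general
    (d : ℕ) (hd : 1 ≤ d) (μ L Δ σ : ℝ)
    (hμ : 0 < μ) (hσ : 0 < σ)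
    {Ω : Type*} {m0 : MeasurableSpace Ω} (P : Measure Ω) [IsProbabilityMeasure P]
    (ℱ : Filtration ℕ m0)
    (m : ℕ → EuclideanSpace ℝ (Fin d) → Ω → EuclideanSpace ℝ (Fin d))
    (θ θstar ξ : ℕ → Ω → EuclideanSpace ℝ (Fin d))
    (θ0 θstar0 : EuclideanSpace ℝ (Fin d))
    (hθ0 : θ 0 = fun _ => θ0) (hθstar0 : θstar 0 = fun _ => θstar0)
    (hm_meas : ∀ t x, StronglyMeasurable[ℱ t] (m t x))
    (hmono : ∀ t ω x y, μ * ‖x - y‖ ^ 2 ≤ ⟪m t x ω - m t y ω, x - y⟫_ℝ)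
    (hlip : ∀ t ω x y, ‖m t x ω - m t y ω‖ ≤ L * ‖x - y‖)
    (hθstar_meas : ∀ t, StronglyMeasurable[ℱ t] (θstar (t + 1)))
    (hzero : ∀ t, ∀ᵐ ω ∂P, m t (θstar (t + 1) ω) ω = 0)
    (hadapted : ∀ t, StronglyMeasurable[ℱ t] (θ t))
    -- the optimized constant stepsize `γ⋆` and steady-state error `𝓔 = 𝓔(γ⋆)`
    (γstar E : ℝ)
    (hγstar_mem : γstar ∈ Set.Ioc (0 : ℝ) (1 / (2 * L)))
    (hE : E = σ ^ 2 * γstar / μ + 4 * Δ ^ 2 / (μ ^ 2 * γstar ^ 2))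
    (hγstar_le : γstar ≤ min (μ / L ^ 2) (1 / L))
    (hupd : ∀ t ω, θ (t + 1) ω = θ t ω - γstar • m t (θ t ω) ω - γstar • ξ t ω)
    (hξ_L2 : ∀ t, MemLp (ξ t) 2 P)
    (hξ_mds : ∀ t, P[ξ t | ℱ t] =ᵐ[P] fun _ => 0)
    (hdrift : ∀ t, ∫ ω, ‖θstar t ω - θstar (t + 1) ω‖ ^ 2 ∂P ≤ Δ ^ 2)
    (hnoise : ∀ t, ∫ ω, ‖ξ t ω‖ ^ 2 ∂P ≤ σ ^ 2)
    (hint_drift : ∀ t, Integrable (fun ω => ‖θstar t ω - θstar (t + 1) ω‖ ^ 2) P) :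
    ∀ t : ℕ,
      2 / (μ * γstar) * Real.log (‖θ0 - θstar0‖ ^ 2 / E) ≤ (t : ℝ) →
      ∫ ω, ‖θ (t + 1) ω - θstar (t + 1) ω‖ ^ 2 ∂P ≤ 3 * E := by
  intro t ht
  obtain ⟨hγ, hγ_half⟩ := hγstar_mem
  obtain ⟨ω₀⟩ := nonempty_of_isProbabilityMeasure P
  have : Nonempty (Fin d) := ⟨⟨0, hd⟩⟩
  have hμL : μ ≤ L := le_of_inner_sub_ge_of_norm_sub_le (hmono 0 ω₀) (hlip 0 ω₀)
  have hL : 0 < L := hμ.trans_le hμL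
  have hγL : γstar * L ^ 2 ≤ μ :=
    (le_div_iff₀ (by positivity)).1 (hγstar_le.trans (min_le_left _ _))
  have hLγ : L * γstar ≤ 1 / 2 := by
    have := mul_le_mul_of_nonneg_left hγ_half hL.le
    rwa [show L * (1 / (2 * L)) = 1 / 2 by field_simp] at this
  have hμγ : μ * γstar ≤ 1 / 2 := (mul_le_mul_of_nonneg_right hμL hγ.le).trans hLγ
  have htrack := sgd_tracking_error_le ℱ hμ hγ hγL (by linarith) hm_meas hmono hlip hθstar_meas
    (by rw [hθstar0]; exact aestronglyMeasurable_const) hzero hadapted hupd hξ_L2 hξ_mds hdrift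
    hnoise hint_drift    (by simp only [hθ0, hθstar0]; exact memLp_const _) (t + 1)
  simp only [hθ0, hθstar0, integral_const, probReal_univ, one_smul] at htrack
  have hburn : (1 - μ * γstar / 2) ^ (t + 1) * ‖θ0 - θstar0‖ ^ 2 ≤ E := by
    refine one_sub_pow_mul_le_of_log_div_le (by linarith) (by positivity)
      (by rw [hE]; positivity) ?_
    calc Real.log (‖θ0 - θstar0‖ ^ 2 / E)
        = μ * γstar / 2 * (2 / (μ * γstar) * Real.log (‖θ0 - θstar0‖ ^ 2 / E)) := by
          field_simp
      _ ≤ μ * γstar / 2 * ((t + 1 : ℕ) : ℝ) := by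
          gcongr
          push_cast
          linarith
  have hsteady : 2 * σ ^ 2 * γstar / μ + 6 * Δ ^ 2 / (μ ^ 2 * γstar ^ 2) ≤ 2 * E := by
    have hgap : 2 * E - (2 * σ ^ 2 * γstar / μ + 6 * Δ ^ 2 / (μ ^ 2 * γstar ^ 2))
        = 2 * Δ ^ 2 / (μ ^ 2 * γstar ^ 2) := by
      rw [hE]
      ring
    linarith [show 0 ≤ 2 * Δ ^ 2 / (μ ^ 2 * γstar ^ 2) by positivity]
  linarith

/-- Time to reach the asymptotic tracking error, in expectation, for nonstationary SGD
run with the stepsize `γ⋆` optimizing the steady-state error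
`𝓔(γ) = σ²γ/μ + 4Δ²/(μ²γ²)` over `(0, 1/(2L)]`: after a burn-in of
`(2/(μγ⋆)) log(‖θ₀ − θ⋆₀‖²/𝓔)` iterations the expected squared tracking error
is at most `3𝓔`. -/
theorem sgd_time_to_track_expectation
    (d : ℕ) (hd : 1 ≤ d) (μ L Δ σ : ℝ)
    (hμ : 0 < μ) (hL : 0 < L) (hΔ : 0 < Δ) (hσ : 0 < σ)
    {Ω : Type*} {m0 : MeasurableSpace Ω} (P : Measure Ω) [IsProbabilityMeasure P]
    (ℱ : Filtration ℕ m0)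
    (m : ℕ → EuclideanSpace ℝ (Fin d) → Ω → EuclideanSpace ℝ (Fin d))
    (θ θstar ξ : ℕ → Ω → EuclideanSpace ℝ (Fin d))
    (θ0 θstar0 : EuclideanSpace ℝ (Fin d))
    (hθ0 : θ 0 = fun _ => θ0) (hθstar0 : θstar 0 = fun _ => θstar0)
    (hm_meas : ∀ t x, StronglyMeasurable[ℱ t] (m t x))
    (hmono : ∀ t ω x y, μ * ‖x - y‖ ^ 2 ≤ ⟪m t x ω - m t y ω, x - y⟫_ℝ)
    (hlip : ∀ t ω x y, ‖m t x ω - m t y ω‖ ≤ L * ‖x - y‖)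
    (hθstar_meas : ∀ t, StronglyMeasurable[ℱ t] (θstar (t + 1)))
    (hzero : ∀ t, ∀ᵐ ω ∂P, m t (θstar (t + 1) ω) ω = 0)
    (hadapted : ∀ t, StronglyMeasurable[ℱ t] (θ t))
    -- the optimized constant stepsize `γ⋆` and steady-state error `𝓔 = 𝓔(γ⋆)`
    (γstar E : ℝ)
    (hγstar_mem : γstar ∈ Set.Ioc (0 : ℝ) (1 / (2 * L)))
    (hE : E = σ ^ 2 * γstar / μ + 4 * Δ ^ 2 / (μ ^ 2 * γstar ^ 2))
    (hmin : ∀ γ ∈ Set.Ioc (0 : ℝ) (1 / (2 * L)),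
      E ≤ σ ^ 2 * γ / μ + 4 * Δ ^ 2 / (μ ^ 2 * γ ^ 2))
    (hγstar_le : γstar ≤ min (μ / L ^ 2) (1 / L))
    (hupd : ∀ t ω, θ (t + 1) ω = θ t ω - γstar • m t (θ t ω) ω - γstar • ξ t ω)
    (hξ_meas : ∀ t, StronglyMeasurable[ℱ (t + 1)] (ξ t))
    (hξ_L2 : ∀ t, MemLp (ξ t) 2 P)
    (hξ_mds : ∀ t, P[ξ t | ℱ t] =ᵐ[P] fun _ => 0)
    (hdrift : ∀ t, ∫ ω, ‖θstar t ω - θstar (t + 1) ω‖ ^ 2 ∂P ≤ Δ ^ 2)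
    (hnoise : ∀ t, ∫ ω, ‖ξ t ω‖ ^ 2 ∂P ≤ σ ^ 2)
    (hint_err : ∀ t, Integrable (fun ω => ‖θ t ω - θstar t ω‖ ^ 2) P)
    (hint_drift : ∀ t, Integrable (fun ω => ‖θstar t ω - θstar (t + 1) ω‖ ^ 2) P)
    (hint_inc : ∀ t, Integrable
      (fun ω => ⟪θ t ω - θstar (t + 1) ω - γstar • m t (θ t ω) ω, ξ t ω⟫_ℝ) P) :
    ∀ t : ℕ,
      2 / (μ * γstar) * Real.log (‖θ0 - θstar0‖ ^ 2 / E) ≤ (t : ℝ) →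
      ∫ ω, ‖θ (t + 1) ω - θstar (t + 1) ω‖ ^ 2 ∂P ≤ 3 * E :=
  sgd_time_to_track_expectation_general d hd μ L Δ σ hμ hσ P ℱ m θ θstar ξ θ0 θstar0 hθ0 hθstar0
    hm_meas hmono hlip hθstar_meas hzero hadapted γstar E hγstar_mem hE hγstar_le hupd hξ_L2 hξ_mds
    hdrift hnoise hint_drift
end

section
/- Let 0 < μ ≤ L, β ∈ [0,1), and β′ ∈ ℝ with β′² ≤ 1. Let 0 < γ ≤ μ(1−β)²/(4L²) and set η := γ/(1−β). Define the 2×2 matrix Γ := [[a, b], [c, d]] with a = 1 − ημ, b = η β′² L²/μ, c = 2η² L²/(1−β), d = β + 2η² β′² L²/(1−β). Then a + c ≤ 1 − ημ/2 and b + d ≤ 3/8 + 5β/8 < 1; consequently the induced ℓ¹ matrix norm satisfies ‖Γ‖₁ = max{a + c, b + d} < 1, and hence the spectral radius of Γ is strictly less than 1. -/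
/-!
The stepsize restriction reads `4ηL² ≤ μ(1-β)`; together with `μ ≤ L` it gives `ημ ≤ (1-β)/4`,
hence `c ≤ ημ/2 ≤ (1-β)/8`, and with `β'² ≤ 1` also `b ≤ (1-β)/4` and `d = β + β'² c ≤ β + c`.
All entries of `Γ` are nonnegative, so its absolute column sums are `a + c` and `b + d`, and
Gershgorin's theorem applied to `Γᵀ` confines every eigenvalue to the disc of radius the largest
column sum.
-/

open Matrix in
theorem Matrix.spectrum_transpose {n R : Type*} [Fintype n] [DecidableEq n] [CommRing R]
    (A : Matrix n n R) : spectrum R Aᵀ = spectrum R A := by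
  ext z
  rw [spectrum.mem_iff, spectrum.mem_iff, ← isUnit_transpose, transpose_sub,
    transpose_transpose, Algebra.algebraMap_eq_smul_one, transpose_smul, transpose_one]

theorem Matrix.norm_le_of_mem_spectrum_of_forall_colSum_le {n K : Type*} [Fintype n]
    [DecidableEq n] [NormedField K] {A : Matrix n n K} {r : ℝ}
    (hA : ∀ j, ∑ i, ‖A i j‖ ≤ r) {z : K} (hz : z ∈ spectrum K A) : ‖z‖ ≤ r := by
  rw [← spectrum_transpose, ← spectrum_toLin', ← Module.End.hasEigenvalue_iff_mem_spectrum] at hz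
  obtain ⟨k, hk⟩ := eigenvalue_mem_ball hz
  rw [mem_closedBall_iff_norm] at hk
  calc ‖z‖ ≤ ‖z - A k k‖ + ‖A k k‖ := norm_le_norm_sub_add z (A k k)
    _ ≤ ∑ i ∈ Finset.univ.erase k, ‖A i k‖ + ‖A k k‖ := by gcongr; exact hk
    _ = ∑ i, ‖A i k‖ := Finset.sum_erase_add _ _ (Finset.mem_univ k)
    _ ≤ r := hA k

theorem four_mul_div_one_sub_mul_sq_le {μ L β γ : ℝ} (hL : 0 < L) (hβ1 : β < 1)
    (hγ : γ ≤ μ * (1 - β) ^ 2 / (4 * L ^ 2)) : 4 * (γ / (1 - β)) * L ^ 2 ≤ μ * (1 - β) := by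
  have hβ : 0 < 1 - β := sub_pos.2 hβ1
  rw [le_div_iff₀ (by positivity)] at hγ
  calc 4 * (γ / (1 - β)) * L ^ 2 = γ * (4 * L ^ 2) / (1 - β) := by ring
    _ ≤ μ * (1 - β) ^ 2 / (1 - β) := by gcongr
    _ = μ * (1 - β) := by field_simp

section StepsizeBounds

variable {μ L β η : ℝ}

theorem mul_le_one_sub_div_four (hμ : 0 < μ) (hμL : μ ≤ L) (hη : 0 ≤ η)
    (hstep : 4 * η * L ^ 2 ≤ μ * (1 - β)) : η * μ ≤ (1 - β) / 4 := by
  have : η * μ ^ 2 ≤ η * L ^ 2 := by gcongr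
  nlinarith

theorem two_mul_sq_mul_sq_div_le (hβ1 : β < 1) (hη : 0 ≤ η)
    (hstep : 4 * η * L ^ 2 ≤ μ * (1 - β)) : 2 * η ^ 2 * L ^ 2 / (1 - β) ≤ η * μ / 2 := by
  rw [div_le_iff₀ (sub_pos.2 hβ1)]
  nlinarith

theorem mul_sq_mul_sq_div_le {β' : ℝ} (hμ : 0 < μ) (hη : 0 ≤ η) (hβ' : β' ^ 2 ≤ 1)
    (hstep : 4 * η * L ^ 2 ≤ μ * (1 - β)) : η * β' ^ 2 * L ^ 2 / μ ≤ (1 - β) / 4 := by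
  rw [div_le_iff₀ hμ]
  have : η * β' ^ 2 * L ^ 2 ≤ η * 1 * L ^ 2 := by gcongr
  linarith

end StepsizeBounds

/-- Uniform stability of the 2×2 energy comparison matrix for SGD with momentum:
under the stepsize restriction `γ ≤ μ(1-β)²/(4L²)`, the column sums of
`Γ = [[a, b], [c, d]]` are bounded by `1 − ημ/2` and `3/8 + 5β/8 < 1`, hence the
induced ℓ¹ norm `max{a+c, b+d}` is `< 1` and every (complex) eigenvalue of `Γ`
has modulus `< 1`. -/
theorem sgdm_energy_matrix_stability
    (μ L β β' γ η a b c d : ℝ) (Γ : Matrix (Fin 2) (Fin 2) ℝ)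
    (hμ : 0 < μ) (hμL : μ ≤ L) (hβ0 : 0 ≤ β) (hβ1 : β < 1)
    (hβ' : β' ^ 2 ≤ 1)
    (hγ0 : 0 < γ) (hγ : γ ≤ μ * (1 - β) ^ 2 / (4 * L ^ 2))
    (hη : η = γ / (1 - β))
    (ha : a = 1 - η * μ)
    (hb : b = η * β' ^ 2 * L ^ 2 / μ)
    (hc : c = 2 * η ^ 2 * L ^ 2 / (1 - β))
    (hd : d = β + 2 * η ^ 2 * β' ^ 2 * L ^ 2 / (1 - β))
    (hΓ : Γ = !![a, b; c, d]) :
    a + c ≤ 1 - η * μ / 2 ∧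
    b + d ≤ 3 / 8 + 5 * β / 8 ∧
    3 / 8 + 5 * β / 8 < 1 ∧
    -- the induced ℓ¹ operator norm of Γ is the maximum column absolute sum
    max (|Γ 0 0| + |Γ 1 0|) (|Γ 0 1| + |Γ 1 1|) = max (a + c) (b + d) ∧
    max (a + c) (b + d) < 1 ∧
    -- hence the spectral radius of Γ is strictly less than 1
    ∀ z ∈ spectrum ℂ (Γ.map (algebraMap ℝ ℂ)), ‖z‖ < 1 := by
  have hη0 : 0 < η := hη ▸ div_pos hγ0 (sub_pos.2 hβ1)
  have hstep : 4 * η * L ^ 2 ≤ μ * (1 - β) :=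
    hη ▸ four_mul_div_one_sub_mul_sq_le (hμ.trans_le hμL) hβ1 hγ
  have hημ : η * μ ≤ (1 - β) / 4 := mul_le_one_sub_div_four hμ hμL hη0.le hstep
  have hc_le : c ≤ η * μ / 2 := hc ▸ two_mul_sq_mul_sq_div_le hβ1 hη0.le hstep
  have hb_le : b ≤ (1 - β) / 4 := hb ▸ mul_sq_mul_sq_div_le hμ hη0.le hβ' hstep
  have hc0 : 0 ≤ c := hc ▸ div_nonneg (by positivity) (sub_pos.2 hβ1).le
  have hd_eq : d = β + β' ^ 2 * c := by rw [hd, hc]; ring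
  have hd_le : d ≤ β + c := hd_eq ▸ add_le_add_right (mul_le_of_le_one_left hc0 hβ') β
  have hd0 : 0 ≤ d := by rw [hd_eq]; positivity
  have hb0 : 0 ≤ b := by rw [hb]; positivity
  have ha0 : 0 ≤ a := by linarith
  have hcol : max (|Γ 0 0| + |Γ 1 0|) (|Γ 0 1| + |Γ 1 1|) = max (a + c) (b + d) := by
    simp [hΓ, abs_of_nonneg, ha0, hb0, hc0, hd0]
  have hmax : max (a + c) (b + d) < 1 := max_lt (by linarith [mul_pos hη0 hμ]) (by linarith)
  refine ⟨by linarith, by linarith, by linarith, hcol, hmax, fun z hz => ?_⟩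
  refine (Matrix.norm_le_of_mem_spectrum_of_forall_colSum_le (fun j => ?_) hz).trans_lt hmax
  fin_cases j <;> simp [Fin.sum_univ_two, hΓ, ha0, hb0, hc0, hd0, abs_of_nonneg]
end

section
/- In the bump-loss construction: if a/r ≤ 1/(12 C_ψ), then for each u ∈ {+1, −1} and every θ ∈ ℝ^d, the Hessian of g_u satisfies ‖∇²g_u(θ) − μ I_d‖_op ≤ μ/4. In particular, each g_u is μ/4-strongly convex and 2μ-smooth on all of ℝ^d (indeed (3μ/4) I_d ⪯ ∇²g_u(θ) ⪯ (5μ/4) I_d for all θ). -/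
/-!
Write `g_u θ = (μ/2)‖θ‖² - c ⟪θ, e₁⟫ ψ(θ/r)` with `|c| = μa`. The Hessian of the perturbation
`⟪θ, e₁⟫ ψ(θ/r)` is `r⁻¹ (e₁ ⊗ ∇ψ + ∇ψ ⊗ e₁ + r⁻¹⟪θ, e₁⟫ ∇²ψ(θ/r))`, and each of the three
operators has norm at most `C_ψ`: for the last one because `∇²ψ(θ/r)` vanishes unless
`‖θ/r‖ ≤ 1`, where `|r⁻¹⟪θ, e₁⟫| ≤ 1`. Hence `‖∇²g_u - μ I‖ ≤ 3μaC_ψ/r ≤ μ/4`. The bounds on the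
quadratic form follow, strong convexity follows by restricting to lines and applying the
one-dimensional second-derivative test, and the Lipschitz bound on `∇g_u` is the mean value
inequality with `‖∇²g_u‖ ≤ 5μ/4`.
-/

open scoped InnerProductSpace
open Set

section SecondOrder

variable {E : Type*} [NormedAddCommGroup E] [InnerProductSpace ℝ E]

theorem abs_inner_apply_self_sub_le {T : E →L[ℝ] E} {μ ε : ℝ}
    (hT : ‖T - μ • ContinuousLinearMap.id ℝ E‖ ≤ ε) (v : E) :
    |⟪T v, v⟫_ℝ - μ * ‖v‖ ^ 2| ≤ ε * ‖v‖ ^ 2 := by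
  have hform : ⟪T v, v⟫_ℝ - μ * ‖v‖ ^ 2 = ⟪(T - μ • ContinuousLinearMap.id ℝ E) v, v⟫_ℝ := by
    simp [inner_sub_left, real_inner_smul_left]
  calc |⟪T v, v⟫_ℝ - μ * ‖v‖ ^ 2| ≤ ‖(T - μ • ContinuousLinearMap.id ℝ E) v‖ * ‖v‖ :=
        hform ▸ abs_real_inner_le_norm _ _
    _ ≤ ‖T - μ • ContinuousLinearMap.id ℝ E‖ * ‖v‖ * ‖v‖ := by
        gcongr; exact ContinuousLinearMap.le_opNorm _ _
    _ ≤ ε * ‖v‖ ^ 2 := by rw [mul_assoc, ← sq]; gcongr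

theorem norm_le_of_norm_sub_smul_id_le {T : E →L[ℝ] E} {μ ε : ℝ}
    (hT : ‖T - μ • ContinuousLinearMap.id ℝ E‖ ≤ ε) : ‖T‖ ≤ |μ| + ε :=
  calc ‖T‖ ≤ ‖μ • ContinuousLinearMap.id ℝ E‖ + ‖T - μ • ContinuousLinearMap.id ℝ E‖ :=
        norm_le_norm_add_norm_sub' _ _
    _ ≤ |μ| * 1 + ε := by
      gcongr
      refine (ContinuousLinearMap.opNorm_smul_le _ _).trans ?_
      rw [Real.norm_eq_abs]
      gcongr
      exact ContinuousLinearMap.norm_id_le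
    _ = |μ| + ε := by rw [mul_one]

theorem lipschitzWith_of_norm_fderiv_sub_smul_id_le {f : E → E} {f' : E → E →L[ℝ] E} {μ ε : ℝ}
    (hf : ∀ x, HasFDerivAt f (f' x) x) (hf' : ∀ x, ‖f' x - μ • ContinuousLinearMap.id ℝ E‖ ≤ ε) :
    LipschitzWith (|μ| + ε).toNNReal f := by
  refine lipschitzWith_of_nnnorm_fderiv_le (fun x => (hf x).differentiableAt) fun x => ?_
  rw [← NNReal.coe_le_coe, coe_nnnorm, (hf x).fderiv]
  exact (norm_le_of_norm_sub_smul_id_le (hf' x)).trans (Real.le_coe_toNNReal _)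

theorem hasFDerivAt_inner_const (e x : E) : HasFDerivAt (fun y => ⟪y, e⟫_ℝ) (innerSL ℝ e) x := by
  have h : (fun y : E => ⟪y, e⟫_ℝ) = innerSL ℝ e := funext fun y => real_inner_comm e y
  exact h ▸ (innerSL ℝ e).hasFDerivAt

variable [CompleteSpace E]

theorem HasGradientAt.sub {f g : E → ℝ} {f' g' x : E} (hf : HasGradientAt f f' x)
    (hg : HasGradientAt g g' x) : HasGradientAt (fun y => f y - g y) (f' - g') x := by
  rw [hasGradientAt_iff_hasFDerivAt, map_sub]
  exact hf.hasFDerivAt.sub hg.hasFDerivAt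

theorem HasGradientAt.const_mul {f : E → ℝ} {f' x : E} (hf : HasGradientAt f f' x) (c : ℝ) :
    HasGradientAt (fun y => c * f y) (c • f') x := by
  rw [hasGradientAt_iff_hasFDerivAt, map_smulₛₗ, RCLike.conj_to_real]
  exact hf.hasFDerivAt.const_mul c

theorem hasGradientAt_half_mul_norm_sq (m : ℝ) (x : E) :
    HasGradientAt (fun y => m / 2 * ‖y‖ ^ 2) (m • x) x := by
  rw [hasGradientAt_iff_hasFDerivAt]
  refine ((hasStrictFDerivAt_norm_sq x).hasFDerivAt.const_mul (m / 2)).congr_fderiv ?_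
  ext v
  simp
  ring

theorem convexOn_univ_of_inner_hessian_nonneg {f : E → ℝ} {f' : E → E} {f'' : E → E →L[ℝ] E}
    (hf : ∀ x, HasGradientAt f (f' x) x) (hf' : ∀ x, HasFDerivAt f' (f'' x) x)
    (hf'' : ∀ x v, 0 ≤ ⟪f'' x v, v⟫_ℝ) : ConvexOn ℝ univ f := by
  refine ⟨convex_univ, fun x _ y _ a b ha hb hab => ?_⟩
  set w := y - x
  have hline (t : ℝ) : HasDerivAt (fun s : ℝ => x + s • w) w t := by
    simpa using ((hasDerivAt_id t).smul_const w).const_add x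
  have hφ' (t : ℝ) : HasDerivAt (fun s => f (x + s • w)) ⟪f' (x + t • w), w⟫_ℝ t := by
    have h := (hf _).hasFDerivAt.comp_hasDerivAt t (hline t)
    rwa [InnerProductSpace.toDual_apply_apply] at h
  have hφ'' (t : ℝ) :
      HasDerivAt (fun s => ⟪f' (x + s • w), w⟫_ℝ) ⟪f'' (x + t • w) w, w⟫_ℝ t := by
    simpa using ((hf' _).comp_hasDerivAt t (hline t)).inner ℝ (hasDerivAt_const t w)
  have hderiv : deriv (fun s => f (x + s • w)) = fun s => ⟪f' (x + s • w), w⟫_ℝ :=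
    funext fun t => (hφ' t).deriv
  have hconv : ConvexOn ℝ univ fun s : ℝ => f (x + s • w) := by
    refine convexOn_univ_of_deriv2_nonneg (fun t => (hφ' t).differentiableAt)
      (hderiv ▸ fun t => (hφ'' t).differentiableAt) fun t => ?_
    rw [Function.iterate_succ_apply, Function.iterate_one, hderiv, (hφ'' t).deriv]
    exact hf'' _ _
  have key := hconv.2 (mem_univ 0) (mem_univ 1) ha hb hab
  simp only [smul_eq_mul, mul_zero, mul_one, zero_add, zero_smul, add_zero, one_smul, w,
    add_sub_cancel] at key
  have hpt : a • x + b • y = x + b • (y - x) := by rw [eq_sub_of_add_eq hab]; module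
  rwa [hpt, smul_eq_mul, smul_eq_mul]

theorem strongConvexOn_univ_of_inner_hessian_ge {f : E → ℝ} {f' : E → E}
    {f'' : E → E →L[ℝ] E} {m : ℝ}
    (hf : ∀ x, HasGradientAt f (f' x) x) (hf' : ∀ x, HasFDerivAt f' (f'' x) x)
    (hf'' : ∀ x v, m * ‖v‖ ^ 2 ≤ ⟪f'' x v, v⟫_ℝ) : StrongConvexOn univ m f := by
  rw [strongConvexOn_iff_convex]
  refine convexOn_univ_of_inner_hessian_nonneg
    (f'' := fun x => f'' x - m • ContinuousLinearMap.id ℝ E)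
    (fun x => (hf x).sub (hasGradientAt_half_mul_norm_sq m x))
    (fun x => (hf' x).sub ((hasFDerivAt_id x).const_smul m)) (fun x v => ?_)
  simpa [inner_sub_left, real_inner_smul_left, real_inner_self_eq_norm_sq] using hf'' x v

theorem strongConvexOn_univ_of_norm_hessian_sub_smul_id_le {f : E → ℝ} {f' : E → E}
    {f'' : E → E →L[ℝ] E} {μ ε : ℝ}
    (hf : ∀ x, HasGradientAt f (f' x) x) (hf' : ∀ x, HasFDerivAt f' (f'' x) x)
    (hf'' : ∀ x, ‖f'' x - μ • ContinuousLinearMap.id ℝ E‖ ≤ ε) :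
    StrongConvexOn univ (μ - ε) f :=
  strongConvexOn_univ_of_inner_hessian_ge hf hf' fun x v => by
    linarith [(abs_le.1 (abs_inner_apply_self_sub_le (hf'' x) v)).1]

end SecondOrder

theorem tsupport_subset_closedBall_of_forall_le_norm {E M : Type*} [SeminormedAddCommGroup E]
    [Zero M] {ψ : E → M} {R : ℝ} (h : ∀ x, R ≤ ‖x‖ → ψ x = 0) :
    tsupport ψ ⊆ Metric.closedBall 0 R :=
  closure_minimal (fun x hx => mem_closedBall_zero_iff.2 (not_lt.1 fun hR => hx (h x hR.le)))
    Metric.isClosed_closedBall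

section Bump

variable {E : Type*} [NormedAddCommGroup E] [InnerProductSpace ℝ E] [CompleteSpace E]

theorem tsupport_gradient_subset (ψ : E → ℝ) : tsupport (gradient ψ) ⊆ tsupport ψ :=
  (tsupport_comp_subset (map_zero (InnerProductSpace.toDual ℝ E).symm) _).trans
    (tsupport_fderiv_subset ℝ)

theorem norm_mul_norm_fderiv_gradient_le {ψ : E → ℝ} {C : ℝ}
    (hsupp : tsupport ψ ⊆ Metric.closedBall 0 1)
    (hhess : ∀ x, ‖fderiv ℝ (gradient ψ) x‖ ≤ C) (y : E) :
    ‖y‖ * ‖fderiv ℝ (gradient ψ) y‖ ≤ C := by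
  by_cases hy : y ∈ tsupport (gradient ψ)
  · have hy1 : ‖y‖ ≤ 1 := mem_closedBall_zero_iff.1 (hsupp (tsupport_gradient_subset ψ hy))
    calc ‖y‖ * ‖fderiv ℝ (gradient ψ) y‖ ≤ 1 * C := by gcongr; exact hhess y
      _ = C := one_mul C
  · rw [Function.notMem_support.1 fun h => hy (support_fderiv_subset ℝ h), norm_zero, mul_zero]
    exact (norm_nonneg _).trans (hhess y)

theorem ContDiff.differentiable_gradient {ψ : E → ℝ} (hψ : ContDiff ℝ 2 ψ) :
    Differentiable ℝ (gradient ψ) :=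
  (InnerProductSpace.toDual ℝ E).symm.differentiable.comp
    ((hψ.fderiv_right (m := 1) le_rfl).differentiable one_ne_zero)

variable (ψ : E → ℝ) (σ : ℝ) (e : E)

/-- The perturbation `θ ↦ ⟪θ, e₁⟫ ψ(θ/r)` of the loss, with `σ = r⁻¹`. -/
def bump (x : E) : ℝ := ⟪x, e⟫_ℝ * ψ (σ • x)

noncomputable def bumpGrad (x : E) : E :=
  ψ (σ • x) • e + (σ * ⟪x, e⟫_ℝ) • gradient ψ (σ • x)

noncomputable def bumpHess (x : E) : E →L[ℝ] E :=
  σ • (InnerProductSpace.rankOne ℝ e (gradient ψ (σ • x))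
    + InnerProductSpace.rankOne ℝ (gradient ψ (σ • x)) e
    + (σ * ⟪x, e⟫_ℝ) • fderiv ℝ (gradient ψ) (σ • x))

variable {ψ}

theorem hasGradientAt_bump (hψ : Differentiable ℝ ψ) (x : E) :
    HasGradientAt (bump ψ σ e) (bumpGrad ψ σ e x) x := by
  rw [hasGradientAt_iff_hasFDerivAt]
  have hcomp := (hψ (σ • x)).hasFDerivAt.comp x ((hasFDerivAt_id x).const_smul σ)
  refine ((hasFDerivAt_inner_const e x).mul hcomp).congr_fderiv ?_
  ext v
  simp only [bumpGrad, gradient, map_add, map_smul, LinearIsometryEquiv.apply_symm_apply,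
    InnerProductSpace.toDual_apply_apply, add_apply, smul_apply,
    ContinuousLinearMap.comp_smulₛₗ, Function.comp_apply, ContinuousLinearMap.comp_id,
    coe_innerSL_apply, smul_eq_mul, Real.ringHom_apply]
  ring

theorem hasFDerivAt_bumpGrad (hψ : ContDiff ℝ 2 ψ) (x : E) :
    HasFDerivAt (bumpGrad ψ σ e) (bumpHess ψ σ e x) x := by
  have hscale := (hasFDerivAt_id (𝕜 := ℝ) x).const_smul σ
  have hinner := (hasFDerivAt_inner_const e x).const_mul σ
  have hψ' := ((hψ.differentiable two_ne_zero (σ • x)).hasFDerivAt.comp x hscale).smul_const e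
  have hgrad' := hinner.smul ((hψ.differentiable_gradient (σ • x)).hasFDerivAt.comp x hscale)
  refine (hψ'.add hgrad').congr_fderiv ?_
  ext v
  simp only [bumpHess, gradient, add_apply, smul_apply, ContinuousLinearMap.smulRight_apply,
    ContinuousLinearMap.comp_smulₛₗ, ContinuousLinearMap.comp_id, Function.comp_apply,
    InnerProductSpace.rankOne_apply, InnerProductSpace.toDual_symm_apply, coe_innerSL_apply,
    smul_eq_mul, smul_add, Real.ringHom_apply]
  module

theorem norm_bumpHess_le {C : ℝ} (hsupp : tsupport ψ ⊆ Metric.closedBall 0 1)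
    (hgrad : ∀ x, ‖gradient ψ x‖ ≤ C) (hhess : ∀ x, ‖fderiv ℝ (gradient ψ) x‖ ≤ C) (x : E) :
    ‖bumpHess ψ σ e x‖ ≤ 3 * |σ| * C * ‖e‖ := by
  have hterm : ‖(σ * ⟪x, e⟫_ℝ) • fderiv ℝ (gradient ψ) (σ • x)‖ ≤ C * ‖e‖ :=
    calc ‖(σ * ⟪x, e⟫_ℝ) • fderiv ℝ (gradient ψ) (σ • x)‖
        = |σ| * ‖⟪x, e⟫_ℝ‖ * ‖fderiv ℝ (gradient ψ) (σ • x)‖ := by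
          rw [norm_smul, norm_mul, Real.norm_eq_abs]
      _ ≤ |σ| * (‖x‖ * ‖e‖) * ‖fderiv ℝ (gradient ψ) (σ • x)‖ := by
          gcongr; exact norm_inner_le_norm x e
      _ = ‖σ • x‖ * ‖fderiv ℝ (gradient ψ) (σ • x)‖ * ‖e‖ := by
          rw [norm_smul, Real.norm_eq_abs]; ring
      _ ≤ C * ‖e‖ := by gcongr; exact norm_mul_norm_fderiv_gradient_le hsupp hhess _
  calc ‖bumpHess ψ σ e x‖ ≤ |σ| * (‖e‖ * C + C * ‖e‖ + C * ‖e‖) := by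
        rw [bumpHess, norm_smul, Real.norm_eq_abs]
        gcongr
        refine norm_add₃_le.trans (add_le_add_three ?_ ?_ hterm)
        · rw [InnerProductSpace.norm_rankOne]; gcongr; exact hgrad _
        · rw [InnerProductSpace.norm_rankOne]; gcongr; exact hgrad _
    _ = 3 * |σ| * C * ‖e‖ := by ring

end Bump

theorem bump_loss_smooth_strongly_convex_general
    (d : ℕ) (hd : 0 < d) (μ a r Cψ : ℝ)
    (hμ : 0 < μ) (ha : 0 < a) (hr : 0 < r) (hCψ : 0 < Cψ)
    (ψ : EuclideanSpace ℝ (Fin d) → ℝ)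
    (hψ_smooth : ContDiff ℝ 2 ψ)
    (hψ_zero : ∀ x, 1 ≤ ‖x‖ → ψ x = 0)
    (hψ_grad : ∀ x, ‖gradient ψ x‖ ≤ Cψ)
    (hψ_hess : ∀ x, ‖fderiv ℝ (fun y => gradient ψ y) x‖ ≤ Cψ)
    (e1 : EuclideanSpace ℝ (Fin d))
    (he1 : e1 = EuclideanSpace.single (⟨0, hd⟩ : Fin d) 1)
    (g : ℝ → EuclideanSpace ℝ (Fin d) → ℝ)
    (hg : ∀ u θ, g u θ = μ / 2 * ‖θ‖ ^ 2 - u * (μ * a) * ⟪θ, e1⟫_ℝ * ψ (r⁻¹ • θ))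
    (har : a / r ≤ 1 / (12 * Cψ)) :
    ∀ u : ℝ, u = 1 ∨ u = -1 →
      (∀ θ, ‖fderiv ℝ (fun x => gradient (g u) x) θ
          - μ • ContinuousLinearMap.id ℝ (EuclideanSpace ℝ (Fin d))‖ ≤ μ / 4) ∧
      (∀ θ v, 3 * μ / 4 * ‖v‖ ^ 2
            ≤ ⟪fderiv ℝ (fun x => gradient (g u) x) θ v, v⟫_ℝ ∧
          ⟪fderiv ℝ (fun x => gradient (g u) x) θ v, v⟫_ℝ ≤ 5 * μ / 4 * ‖v‖ ^ 2) ∧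
      StrongConvexOn Set.univ (μ / 4) (g u) ∧
      LipschitzWith (Real.toNNReal (2 * μ)) (fun x => gradient (g u) x) := by
  intro u hu
  set c := u * (μ * a)
  have hc : |c| = μ * a := by rcases hu with rfl | rfl <;> simp [c, abs_of_pos (mul_pos hμ ha)]
  have he1_norm : ‖e1‖ = 1 := by simp [he1]
  have hsupp := tsupport_subset_closedBall_of_forall_le_norm hψ_zero
  have hgu : g u = fun θ => μ / 2 * ‖θ‖ ^ 2 - c * bump ψ r⁻¹ e1 θ :=
    funext fun θ => by rw [hg, bump]; ring
  have hgrad (θ) : HasGradientAt (g u) (μ • θ - c • bumpGrad ψ r⁻¹ e1 θ) θ := hgu ▸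
    (hasGradientAt_half_mul_norm_sq μ θ).sub
      ((hasGradientAt_bump r⁻¹ e1 (hψ_smooth.differentiable two_ne_zero) θ).const_mul c)
  have hhess (θ) : HasFDerivAt (gradient (g u))
      (μ • ContinuousLinearMap.id ℝ _ - c • bumpHess ψ r⁻¹ e1 θ) θ := by
    rw [gradient_eq hgrad]
    exact ((hasFDerivAt_id θ).const_smul μ).sub
      ((hasFDerivAt_bumpGrad r⁻¹ e1 hψ_smooth θ).const_smul c)
  have hclose (θ) : ‖(μ • ContinuousLinearMap.id ℝ _ - c • bumpHess ψ r⁻¹ e1 θ)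
      - μ • ContinuousLinearMap.id ℝ (EuclideanSpace ℝ (Fin d))‖ ≤ μ / 4 :=
    calc _ = |c| * ‖bumpHess ψ r⁻¹ e1 θ‖ := by
          rw [sub_sub_cancel_left, norm_neg, norm_smul, Real.norm_eq_abs]
      _ ≤ μ * a * (3 * |r⁻¹| * Cψ * ‖e1‖) := by
          rw [hc]; gcongr; exact norm_bumpHess_le r⁻¹ e1 hsupp hψ_grad hψ_hess θ
      _ = 3 * μ * Cψ * (a / r) := by rw [he1_norm, abs_inv, abs_of_pos hr]; ring
      _ ≤ 3 * μ * Cψ * (1 / (12 * Cψ)) := by gcongr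
      _ = μ / 4 := by field_simp; ring
  have hfderiv (θ) := (hhess θ).fderiv
  refine ⟨fun θ => hfderiv θ ▸ hclose θ, fun θ v => ?_, ?_, ?_⟩
  · have := abs_le.1 (abs_inner_apply_self_sub_le (hclose θ) v)
    rw [hfderiv]
    constructor <;> linarith
  · exact (strongConvexOn_univ_of_norm_hessian_sub_smul_id_le
      (fun θ => (hgrad θ).differentiableAt.hasGradientAt) hhess hclose).mono
      (by linarith)
  · refine (lipschitzWith_of_norm_fderiv_sub_smul_id_le hhess hclose).weaken ?_
    rw [abs_of_pos hμ]
    exact Real.toNNReal_le_toNNReal (by linarith)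

/-- Smoothness and strong convexity of the localized bump losses
`g_u(θ) = (μ/2)‖θ‖² − u·μa·⟨θ,e₁⟩·ψ(θ/r)`: if `a/r ≤ 1/(12 C_ψ)` then for each
`u ∈ {±1}` the Hessian satisfies `‖∇²g_u(θ) − μ I‖_op ≤ μ/4` for all `θ`; in
particular `(3μ/4) I ⪯ ∇²g_u ⪯ (5μ/4) I` everywhere, `g_u` is `μ/4`-strongly
convex and `2μ`-smooth on all of `ℝ^d`. -/
theorem bump_loss_smooth_strongly_convex
    (d : ℕ) (hd : 0 < d) (μ a r Cψ : ℝ)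
    (hμ : 0 < μ) (ha : 0 < a) (hr : 0 < r) (hCψ : 0 < Cψ)
    (ψ : EuclideanSpace ℝ (Fin d) → ℝ)
    (hψ_smooth : ContDiff ℝ 2 ψ)
    (hψ_range : ∀ x, 0 ≤ ψ x ∧ ψ x ≤ 1)
    (hψ_one : ∀ x, ‖x‖ ≤ 1 / 2 → ψ x = 1)
    (hψ_zero : ∀ x, 1 ≤ ‖x‖ → ψ x = 0)
    (hψ_grad : ∀ x, ‖gradient ψ x‖ ≤ Cψ)
    (hψ_hess : ∀ x, ‖fderiv ℝ (fun y => gradient ψ y) x‖ ≤ Cψ)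
    (e1 : EuclideanSpace ℝ (Fin d))
    (he1 : e1 = EuclideanSpace.single (⟨0, hd⟩ : Fin d) 1)
    (g : ℝ → EuclideanSpace ℝ (Fin d) → ℝ)
    (hg : ∀ u θ, g u θ = μ / 2 * ‖θ‖ ^ 2 - u * (μ * a) * ⟪θ, e1⟫_ℝ * ψ (r⁻¹ • θ))
    (har : a / r ≤ 1 / (12 * Cψ)) :
    ∀ u : ℝ, u = 1 ∨ u = -1 →
      (∀ θ, ‖fderiv ℝ (fun x => gradient (g u) x) θ
          - μ • ContinuousLinearMap.id ℝ (EuclideanSpace ℝ (Fin d))‖ ≤ μ / 4) ∧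
      (∀ θ v, 3 * μ / 4 * ‖v‖ ^ 2
            ≤ ⟪fderiv ℝ (fun x => gradient (g u) x) θ v, v⟫_ℝ ∧
          ⟪fderiv ℝ (fun x => gradient (g u) x) θ v, v⟫_ℝ ≤ 5 * μ / 4 * ‖v‖ ^ 2) ∧
      StrongConvexOn Set.univ (μ / 4) (g u) ∧
      LipschitzWith (Real.toNNReal (2 * μ)) (fun x => gradient (g u) x) :=
  bump_loss_smooth_strongly_convex_general d hd μ a r Cψ hμ ha hr hCψ ψ hψ_smooth hψ_zero hψ_grad
    hψ_hess e1 he1 g hg har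
end

section
/- In the bump-loss construction, assume a ≤ r/4 and a/r ≤ 1/(12 C_ψ). Then: (i) for each u ∈ {+1, −1}, the point u·a·e₁ is the unique global minimizer of g_u on ℝ^d; (ii) for every θ ∈ ℝ^d, max{ g₊(θ) − g₊(a e₁), g₋(θ) − g₋(−a e₁) } ≥ μa²/8; consequently, for any nonempty Θ ⊆ ℝ^d the two-point discrepancy χ(g₊, g₋) := inf_{θ∈Θ} max{ g₊(θ) − inf_Θ g₊, g₋(θ) − inf_Θ g₋ } satisfies χ(g₊, g₋) ≥ μa²/8 whenever ±a e₁ ∈ Θ. -/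
/-!
As `0 ≤ ψ ≤ 1` and `|⟪θ, e₁⟫| ≤ ‖θ‖`, the tilt of `g_u` is at most `μ a ‖θ‖`, whence
`g_u θ ≥ μ/2 ‖θ‖² - μ a ‖θ‖ = μ/2 (‖θ‖ - a)² - μ a²/2`. The bump equals `1` on the ball of
radius `r/2`, so `g_u (u a e₁) = -μ a²/2` attains this bound, and equality forces `‖θ‖ = a` and
`u ⟪θ, e₁⟫ = a`, i.e. `θ = u a e₁`. The tilts of `g₊` and `g₋` cancel, so the two gaps add up
to `μ ‖θ‖² + μ a² ≥ μ a²`.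
-/

open scoped InnerProductSpace

section TiltedQuadratic

variable {E : Type*} [NormedAddCommGroup E] [InnerProductSpace ℝ E]

/-- The loss `g_u`, with the rescaled bump `θ ↦ ψ (r⁻¹ • θ)` abstracted to a weight `φ`. -/
noncomputable def tiltedQuadratic (μ a u : ℝ) (e : E) (φ : E → ℝ) (θ : E) : ℝ :=
  μ / 2 * ‖θ‖ ^ 2 - u * (μ * a) * ⟪θ, e⟫_ℝ * φ θ

variable {μ a u : ℝ} {e : E} {φ : E → ℝ}

theorem tiltedQuadratic_add_tiltedQuadratic_neg (θ : E) :
    tiltedQuadratic μ a u e φ θ + tiltedQuadratic μ a (-u) e φ θ = μ * ‖θ‖ ^ 2 := by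
  unfold tiltedQuadratic
  ring

theorem le_max_tiltedQuadratic_add (hμ : 0 ≤ μ) (θ : E) :
    μ * a ^ 2 / 2 ≤ max (tiltedQuadratic μ a u e φ θ + μ * a ^ 2 / 2)
      (tiltedQuadratic μ a (-u) e φ θ + μ * a ^ 2 / 2) := by
  set x := tiltedQuadratic μ a u e φ θ
  set y := tiltedQuadratic μ a (-u) e φ θ
  have hsum : x + y = μ * ‖θ‖ ^ 2 := tiltedQuadratic_add_tiltedQuadratic_neg θ
  linarith [le_max_left (x + μ * a ^ 2 / 2) (y + μ * a ^ 2 / 2),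
    le_max_right (x + μ * a ^ 2 / 2) (y + μ * a ^ 2 / 2), mul_nonneg hμ (sq_nonneg ‖θ‖)]

theorem tiltedQuadratic_smul_of_eq_one (hu : |u| = 1) (he : ‖e‖ = 1)
    (hφ : φ ((u * a) • e) = 1) :
    tiltedQuadratic μ a u e φ ((u * a) • e) = -(μ * a ^ 2 / 2) := by
  have hu2 : u ^ 2 = 1 := by rw [← sq_abs, hu, one_pow]
  have he2 : ⟪e, e⟫_ℝ = 1 := by rw [real_inner_self_eq_norm_sq, he, one_pow]
  rw [tiltedQuadratic, hφ, norm_smul, he, real_inner_smul_left, he2, Real.norm_eq_abs, mul_one,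
    sq_abs]
  linear_combination (-(μ * a ^ 2) / 2) * hu2

variable (hu : |u| = 1) (he : ‖e‖ = 1) (hφ : ∀ θ, 0 ≤ φ θ ∧ φ θ ≤ 1)
include hu he hφ

theorem mul_inner_mul_weight_le_norm (θ : E) : u * ⟪θ, e⟫_ℝ * φ θ ≤ ‖θ‖ :=
  calc u * ⟪θ, e⟫_ℝ * φ θ ≤ |u * ⟪θ, e⟫_ℝ * φ θ| := le_abs_self _
    _ = |⟪θ, e⟫_ℝ| * φ θ := by rw [abs_mul, abs_mul, hu, one_mul, abs_of_nonneg (hφ θ).1]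
    _ ≤ |⟪θ, e⟫_ℝ| := mul_le_of_le_one_right (abs_nonneg _) (hφ θ).2
    _ ≤ ‖θ‖ * ‖e‖ := abs_real_inner_le_norm θ e
    _ = ‖θ‖ := by rw [he, mul_one]

theorem sq_sub_le_tiltedQuadratic (hμ : 0 ≤ μ) (ha : 0 ≤ a) (θ : E) :
    μ / 2 * (‖θ‖ - a) ^ 2 - μ * a ^ 2 / 2 ≤ tiltedQuadratic μ a u e φ θ := by
  have htilt := mul_le_mul_of_nonneg_left (mul_inner_mul_weight_le_norm hu he hφ θ)
    (mul_nonneg hμ ha)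
  unfold tiltedQuadratic
  linarith

theorem neg_le_tiltedQuadratic (hμ : 0 ≤ μ) (ha : 0 ≤ a) (θ : E) :
    -(μ * a ^ 2 / 2) ≤ tiltedQuadratic μ a u e φ θ := by
  have hlow := sq_sub_le_tiltedQuadratic hu he hφ hμ ha θ
  nlinarith [sq_nonneg (‖θ‖ - a)]

theorem tiltedQuadratic_smul_le (hμ : 0 ≤ μ) (ha : 0 ≤ a) (hφ_one : φ ((u * a) • e) = 1)
    (θ : E) : tiltedQuadratic μ a u e φ ((u * a) • e) ≤ tiltedQuadratic μ a u e φ θ := by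
  rw [tiltedQuadratic_smul_of_eq_one hu he hφ_one]
  exact neg_le_tiltedQuadratic hu he hφ hμ ha θ

theorem eq_smul_of_tiltedQuadratic_eq (hμ : 0 < μ) (ha : 0 < a) {θ : E}
    (hθ : tiltedQuadratic μ a u e φ θ = -(μ * a ^ 2 / 2)) : θ = (u * a) • e := by
  set t := u * ⟪θ, e⟫_ℝ
  have hnorm : ‖θ‖ = a := by
    have hlow := sq_sub_le_tiltedQuadratic hu he hφ hμ.le ha.le θ
    have hsq : (‖θ‖ - a) ^ 2 = 0 := by nlinarith [sq_nonneg (‖θ‖ - a)]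
    linarith [pow_eq_zero_iff (n := 2) two_ne_zero |>.mp hsq]
  have htilt_eq : t * φ θ = a := by
    have hθ' : μ * a * (t * φ θ) = μ * a * a := by
      rw [tiltedQuadratic, hnorm] at hθ
      linear_combination -hθ
    exact mul_left_cancel₀ (by positivity) hθ'
  -- `t ≤ |u| ‖θ‖ ‖e‖ = a`, and `t ≥ t φ θ = a` because `t φ θ = a > 0` forces `t > 0`.
  have ht : t = a := by
    have ht_le : t ≤ a := by
      have : |t| ≤ ‖θ‖ := by simpa [t, abs_mul, hu, he] using abs_real_inner_le_norm θ e
      linarith [le_abs_self t]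
    have ht_pos : 0 < t := by
      by_contra! h
      nlinarith [(hφ θ).1]
    nlinarith [(hφ θ).2]
  have hu2 : u ^ 2 = 1 := by rw [← sq_abs, hu, one_pow]
  rw [← sub_eq_zero, ← norm_eq_zero, ← pow_eq_zero_iff two_ne_zero, norm_sub_sq_real,
    real_inner_smul_right, norm_smul, he, Real.norm_eq_abs, mul_one, sq_abs, hnorm]
  linear_combination (-2 * a) * ht + a ^ 2 * hu2

end TiltedQuadratic

theorem apply_inv_smul_smul_eq_one {E : Type*} [NormedAddCommGroup E] [NormedSpace ℝ E]
    {ψ : E → ℝ} (hψ_one : ∀ x, ‖x‖ ≤ 1 / 2 → ψ x = 1) {e : E} (he : ‖e‖ = 1) {r c : ℝ}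
    (hr : 0 < r) (hc : |c| ≤ r / 2) : ψ (r⁻¹ • c • e) = 1 := by
  refine hψ_one _ ?_
  rw [norm_smul, norm_smul, he, norm_inv, Real.norm_eq_abs, Real.norm_eq_abs, abs_of_pos hr,
    mul_one, inv_mul_le_iff₀ hr]
  linarith

section TwoPointDiscrepancy

variable {α : Type*}

noncomputable def twoPointDiscrepancy (Θ : Set α) (f g : α → ℝ) : ℝ :=
  sInf ((fun θ => max (f θ - sInf (f '' Θ)) (g θ - sInf (g '' Θ))) '' Θ)

theorem csInf_image_eq_of_isMinOn {f : α → ℝ} {Θ : Set α} {x : α} (hx : x ∈ Θ)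
    (hf : IsMinOn f Θ x) : sInf (f '' Θ) = f x :=
  IsLeast.csInf_eq ⟨Set.mem_image_of_mem f hx, by
    rintro _ ⟨θ, hθ, rfl⟩
    exact isMinOn_iff.mp hf θ hθ⟩

theorem le_twoPointDiscrepancy {f g : α → ℝ} {Θ : Set α} {x y : α} {c : ℝ}
    (hx : x ∈ Θ) (hy : y ∈ Θ) (hf : IsMinOn f Θ x) (hg : IsMinOn g Θ y)
    (hgap : ∀ θ ∈ Θ, c ≤ max (f θ - f x) (g θ - g y)) : c ≤ twoPointDiscrepancy Θ f g := by
  rw [twoPointDiscrepancy, csInf_image_eq_of_isMinOn hx hf, csInf_image_eq_of_isMinOn hy hg]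
  refine le_csInf (Set.image_nonempty.mpr ⟨x, hx⟩) ?_
  rintro _ ⟨θ, hθ, rfl⟩
  exact hgap θ hθ

end TwoPointDiscrepancy

theorem bump_loss_minimizers_and_discrepancy_general
    (d : ℕ) (hd : 0 < d) (μ a r : ℝ)
    (hμ : 0 < μ) (ha : 0 < a)
    (ψ : EuclideanSpace ℝ (Fin d) → ℝ)
    (hψ_range : ∀ x, 0 ≤ ψ x ∧ ψ x ≤ 1)
    (hψ_one : ∀ x, ‖x‖ ≤ 1 / 2 → ψ x = 1)
    (e1 : EuclideanSpace ℝ (Fin d))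
    (he1 : e1 = EuclideanSpace.single (⟨0, hd⟩ : Fin d) 1)
    (g : ℝ → EuclideanSpace ℝ (Fin d) → ℝ)
    (hg : ∀ u θ, g u θ = μ / 2 * ‖θ‖ ^ 2 - u * (μ * a) * ⟪θ, e1⟫_ℝ * ψ (r⁻¹ • θ))
    (har4 : a ≤ r / 4) :
    -- (i) unique global minimizers
    (∀ u : ℝ, u = 1 ∨ u = -1 →
      (∀ θ, g u ((u * a) • e1) ≤ g u θ) ∧
      (∀ θ, g u θ = g u ((u * a) • e1) → θ = (u * a) • e1)) ∧
    -- (ii) pointwise discrepancy lower bound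
    (∀ θ, μ * a ^ 2 / 8 ≤
      max (g 1 θ - g 1 (a • e1)) (g (-1) θ - g (-1) ((-a) • e1))) ∧
    -- consequence: two-point discrepancy over any Θ containing ±a·e₁
    (∀ Θ : Set (EuclideanSpace ℝ (Fin d)), a • e1 ∈ Θ → (-a) • e1 ∈ Θ →
      μ * a ^ 2 / 8 ≤
        sInf ((fun θ => max (g 1 θ - sInf (g 1 '' Θ)) (g (-1) θ - sInf (g (-1) '' Θ)))
          '' Θ)) := by
  have hr : 0 < r := by linarith
  have he1_norm : ‖e1‖ = 1 := by rw [he1, PiLp.norm_single, norm_one]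
  set φ : EuclideanSpace ℝ (Fin d) → ℝ := fun θ => ψ (r⁻¹ • θ)
  have hφ : ∀ θ, 0 ≤ φ θ ∧ φ θ ≤ 1 := fun θ => hψ_range _
  have hφ_one : ∀ u : ℝ, |u| = 1 → φ ((u * a) • e1) = 1 := fun u hu =>
    apply_inv_smul_smul_eq_one hψ_one he1_norm hr <| by
      rw [abs_mul, hu, one_mul, abs_of_pos ha]
      linarith
  have hg_eq : ∀ u, g u = tiltedQuadratic μ a u e1 φ := fun u => funext (hg u)
  have hval : ∀ u : ℝ, |u| = 1 → g u ((u * a) • e1) = -(μ * a ^ 2 / 2) := fun u hu => by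
    rw [hg_eq]
    exact tiltedQuadratic_smul_of_eq_one hu he1_norm (hφ_one u hu)
  have hmin : ∀ u : ℝ, |u| = 1 → ∀ θ, g u ((u * a) • e1) ≤ g u θ := fun u hu => by
    rw [hg_eq]
    exact tiltedQuadratic_smul_le hu he1_norm hφ hμ.le ha.le (hφ_one u hu)
  have hmin_pos : ∀ θ, g 1 (a • e1) ≤ g 1 θ := by simpa using hmin 1 abs_one
  have hmin_neg : ∀ θ, g (-1) ((-a) • e1) ≤ g (-1) θ := by simpa using hmin (-1) (by simp)
  have hgap : ∀ θ, μ * a ^ 2 / 8 ≤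
      max (g 1 θ - g 1 (a • e1)) (g (-1) θ - g (-1) ((-a) • e1)) := fun θ => by
    have hval_pos : g 1 (a • e1) = -(μ * a ^ 2 / 2) := by simpa using hval 1 abs_one
    have hval_neg : g (-1) ((-a) • e1) = -(μ * a ^ 2 / 2) := by simpa using hval (-1) (by simp)
    rw [hval_pos, hval_neg, sub_neg_eq_add, sub_neg_eq_add, hg_eq, hg_eq]
    linarith [le_max_tiltedQuadratic_add (u := 1) (e := e1) (φ := φ) (a := a) hμ.le θ,
      mul_pos hμ (pow_pos ha 2)]
  refine ⟨fun u hu => ?_, hgap, fun Θ hΘ_pos hΘ_neg => ?_⟩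
  · have hu_abs : |u| = 1 := (abs_eq zero_le_one).mpr hu
    refine ⟨hmin u hu_abs, fun θ hθ => ?_⟩
    rw [hval u hu_abs, hg_eq] at hθ
    exact eq_smul_of_tiltedQuadratic_eq hu_abs he1_norm hφ hμ ha hθ
  · exact le_twoPointDiscrepancy hΘ_pos hΘ_neg
      (isMinOn_univ_iff.mpr hmin_pos |>.on_subset (Set.subset_univ Θ))
      (isMinOn_univ_iff.mpr hmin_neg |>.on_subset (Set.subset_univ Θ)) fun θ _ => hgap θ

/-- Minimizers and two-point discrepancy of the bump-loss construction: under
`a ≤ r/4` and `a/r ≤ 1/(12 C_ψ)`, each `g_u` has `u·a·e₁` as its unique global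
minimizer, the pointwise max of suboptimality gaps is at least `μa²/8`, and
consequently the two-point discrepancy `χ(g₊, g₋)` over any `Θ` containing
`±a·e₁` is at least `μa²/8`. -/
theorem bump_loss_minimizers_and_discrepancy
    (d : ℕ) (hd : 0 < d) (μ a r Cψ : ℝ)
    (hμ : 0 < μ) (ha : 0 < a) (hr : 0 < r) (hCψ : 0 < Cψ)
    (ψ : EuclideanSpace ℝ (Fin d) → ℝ)
    (hψ_smooth : ContDiff ℝ 2 ψ)
    (hψ_range : ∀ x, 0 ≤ ψ x ∧ ψ x ≤ 1)
    (hψ_one : ∀ x, ‖x‖ ≤ 1 / 2 → ψ x = 1)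
    (hψ_zero : ∀ x, 1 ≤ ‖x‖ → ψ x = 0)
    (hψ_grad : ∀ x, ‖gradient ψ x‖ ≤ Cψ)
    (hψ_hess : ∀ x, ‖fderiv ℝ (fun y => gradient ψ y) x‖ ≤ Cψ)
    (e1 : EuclideanSpace ℝ (Fin d))
    (he1 : e1 = EuclideanSpace.single (⟨0, hd⟩ : Fin d) 1)
    (g : ℝ → EuclideanSpace ℝ (Fin d) → ℝ)
    (hg : ∀ u θ, g u θ = μ / 2 * ‖θ‖ ^ 2 - u * (μ * a) * ⟪θ, e1⟫_ℝ * ψ (r⁻¹ • θ))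
    (har4 : a ≤ r / 4) (har : a / r ≤ 1 / (12 * Cψ)) :
    -- (i) unique global minimizers
    (∀ u : ℝ, u = 1 ∨ u = -1 →
      (∀ θ, g u ((u * a) • e1) ≤ g u θ) ∧
      (∀ θ, g u θ = g u ((u * a) • e1) → θ = (u * a) • e1)) ∧
    -- (ii) pointwise discrepancy lower bound
    (∀ θ, μ * a ^ 2 / 8 ≤
      max (g 1 θ - g 1 (a • e1)) (g (-1) θ - g (-1) ((-a) • e1))) ∧
    -- consequence: two-point discrepancy over any Θ containing ±a·e₁
    (∀ Θ : Set (EuclideanSpace ℝ (Fin d)), a • e1 ∈ Θ → (-a) • e1 ∈ Θ →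
      μ * a ^ 2 / 8 ≤
        sInf ((fun θ => max (g 1 θ - sInf (g 1 '' Θ)) (g (-1) θ - sInf (g (-1) '' Θ)))
          '' Θ)) :=
  bump_loss_minimizers_and_discrepancy_general d hd μ a r hμ ha ψ hψ_range hψ_one e1 he1 g hg har4
end

section
/- Fix μ, γ, σ > 0 and β ∈ [0,1), and set a := 1 + β − γμ. Consider the 2×2 matrices A := [[a, −β], [1, 0]] and B := (−γ, 0)ᵀ arising from the Heavy-Ball recursion x_{t+1} = (1+β−γμ)x_t − βx_{t−1} − γζ_{t+1} on the quadratic x ↦ (μ/2)x². Assume 0 < γμ < 2(1+β). Define v := (1+β)γσ² / ( (1−β)·μ·(2(1+β) − γμ) ) and c := a·v/(1+β). Then the symmetric matrix Σ := [[v, c], [c, v]] solves the discrete-time Lyapunov equation Σ = A Σ Aᵀ + σ² B Bᵀ. Moreover, if additionally γμ ≤ 1 + β, then v ≥ γσ²/(4μ(1−β)). -/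
/-!
Writing `Σ = [[v, c], [c, v]]`, the Lyapunov equation for the companion matrix
`A = [[a, -β], [1, 0]]` reduces to two scalar equations: `c (1 + β) = a v` and
`(1 - a² - β²) v + 2aβc = σ²γ²`. Eliminating `c` turns the second into
`(1 - β)((1 + β)² - a²) v = (1 + β) σ²γ²`, and for `a = 1 + β - γμ` the factor
`(1 + β)² - a²` is `γμ (2(1 + β) - γμ)`, which gives the stated `v`. Since
`2(1 + β) - γμ ≤ 2(1 + β)`, in fact `v ≥ γσ²/(2μ(1 - β))`.
-/

open Matrix

theorem companion_lyapunov_rhs {R : Type*} [CommRing R] (a β g s v c : R) :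
    !![a, -β; 1, 0] * !![v, c; c, v] * (!![a, -β; 1, 0])ᵀ + s • (!![g; 0] * (!![g; 0])ᵀ) =
      !![a ^ 2 * v - 2 * a * β * c + β ^ 2 * v + s * g ^ 2, a * v - β * c; a * v - β * c, v] := by
  ext i j
  fin_cases i <;> fin_cases j <;> simp [vecMul, dotProduct] <;> ring

theorem companion_lyapunov_iff {R : Type*} [CommRing R] (a β g s v c : R) :
    !![v, c; c, v] = !![a, -β; 1, 0] * !![v, c; c, v] * (!![a, -β; 1, 0])ᵀ +
        s • (!![g; 0] * (!![g; 0])ᵀ) ↔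
      v = a ^ 2 * v - 2 * a * β * c + β ^ 2 * v + s * g ^ 2 ∧ c = a * v - β * c := by
  rw [companion_lyapunov_rhs]
  simp

theorem companion_lyapunov_scalar_of_variance {K : Type*} [Field K] {a β s v c : K}
    (h1β : 1 + β ≠ 0) (hc : c = a * v / (1 + β))
    (hv : (1 - β) * ((1 + β) ^ 2 - a ^ 2) * v = (1 + β) * s) :
    v = a ^ 2 * v - 2 * a * β * c + β ^ 2 * v + s ∧ c = a * v - β * c := by
  have hc' : c * (1 + β) = a * v := by rw [hc, div_mul_cancel₀ _ h1β]
  refine ⟨mul_right_cancel₀ h1β ?_, by linear_combination hc'⟩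
  linear_combination hv + 2 * a * β * hc'

theorem half_le_stationary_variance {μ γ σ β : ℝ} (hμ : 0 < μ) (hγ : 0 ≤ γ) (hβ1 : β < 1)
    (hstab : γ * μ < 2 * (1 + β)) :
    γ * σ ^ 2 / (2 * μ * (1 - β)) ≤
      (1 + β) * γ * σ ^ 2 / ((1 - β) * μ * (2 * (1 + β) - γ * μ)) := by
  have h1β : 0 < 1 - β := by linarith
  have hden : 0 < 2 * (1 + β) - γ * μ := by linarith
  rw [div_le_div_iff₀ (by positivity) (by positivity)]
  have : 0 ≤ γ * σ ^ 2 * (1 - β) * μ * (γ * μ) := by positivity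
  linear_combination this

theorem heavy_ball_stationary_variance_general
    (μ γ σ β : ℝ) (hμ : 0 < μ) (hγ : 0 < γ)
    (hβ1 : β < 1)
    (hstab : γ * μ < 2 * (1 + β))
    (a v c : ℝ)
    (ha : a = 1 + β - γ * μ)
    (hv : v = (1 + β) * γ * σ ^ 2 / ((1 - β) * μ * (2 * (1 + β) - γ * μ)))
    (hc : c = a * v / (1 + β))
    (A : Matrix (Fin 2) (Fin 2) ℝ) (hA : A = !![a, -β; 1, 0])
    (B : Matrix (Fin 2) (Fin 1) ℝ) (hB : B = !![-γ; 0])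
    (S : Matrix (Fin 2) (Fin 2) ℝ) (hS : S = !![v, c; c, v]) :
    S = A * S * A.transpose + σ ^ 2 • (B * B.transpose) ∧
    (γ * μ ≤ 1 + β → γ * σ ^ 2 / (4 * μ * (1 - β)) ≤ v) := by
  have h1β : 0 < 1 - β := by linarith
  have hden : 0 < 2 * (1 + β) - γ * μ := by linarith
  have hv' : v * ((1 - β) * μ * (2 * (1 + β) - γ * μ)) = (1 + β) * γ * σ ^ 2 := by
    rw [hv, div_mul_cancel₀ _ (by positivity)]
  subst hA hB hS ha
  refine ⟨(companion_lyapunov_iff _ _ _ _ _ _).2 ?_, fun _ => ?_⟩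
  · refine companion_lyapunov_scalar_of_variance (by nlinarith [mul_pos hγ hμ]) hc ?_
    linear_combination γ * hv'
  · calc γ * σ ^ 2 / (4 * μ * (1 - β)) ≤ γ * σ ^ 2 / (2 * μ * (1 - β)) := by
          gcongr; norm_num
      _ ≤ v := hv ▸ half_le_stationary_variance hμ hγ.le hβ1 hstab

/-- Exact stationary covariance of Heavy-Ball on a quadratic: the matrix
`Σ = [[v, c], [c, v]]` with `v = (1+β)γσ²/((1−β)μ(2(1+β)−γμ))` and
`c = a·v/(1+β)` solves the discrete-time Lyapunov equation
`Σ = A Σ Aᵀ + σ² B Bᵀ`, and in the small-step regime `γμ ≤ 1+β` the stationary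
variance satisfies `v ≥ γσ²/(4μ(1−β))`. -/
theorem heavy_ball_stationary_variance
    (μ γ σ β : ℝ) (hμ : 0 < μ) (hγ : 0 < γ) (hσ : 0 < σ)
    (hβ0 : 0 ≤ β) (hβ1 : β < 1)
    (hstab : γ * μ < 2 * (1 + β))
    (a v c : ℝ)
    (ha : a = 1 + β - γ * μ)
    (hv : v = (1 + β) * γ * σ ^ 2 / ((1 - β) * μ * (2 * (1 + β) - γ * μ)))
    (hc : c = a * v / (1 + β))
    (A : Matrix (Fin 2) (Fin 2) ℝ) (hA : A = !![a, -β; 1, 0])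
    (B : Matrix (Fin 2) (Fin 1) ℝ) (hB : B = !![-γ; 0])
    (S : Matrix (Fin 2) (Fin 2) ℝ) (hS : S = !![v, c; c, v]) :
    S = A * S * A.transpose + σ ^ 2 • (B * B.transpose) ∧
    (γ * μ ≤ 1 + β → γ * σ ^ 2 / (4 * μ * (1 - β)) ≤ v) :=
  heavy_ball_stationary_variance_general μ γ σ β hμ hγ hβ1 hstab a v c ha hv hc A hA B hB S hS
end

section
/- Let μ > 0, γ > 0 and β ∈ [0,1) satisfy 0 < γμ ≤ min{(1 − √β)², (1−β)/4}. Then the quadratic polynomial λ² − (1 + β − γμ)λ + β has two real roots λ₋ ≤ λ₊, both roots lie in the interval [0, 1), and the larger root satisfies λ₊ ≥ 1 − 2γμ/(1−β). -/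
/-! By Vieta, the roots `λ₋ ≤ λ₊` have sum `1 + β − γμ` and product `β`, and the condition
`γμ ≤ (1 − √β)²` makes them real. Both roots are then nonnegative, and
`(1 − λ₊)(1 − λ₋) = γμ > 0` puts both below `1`. Finally `λ₋ ≤ √(λ₋λ₊) = √β`, so
`1 − λ₋ ≥ 1 − √β ≥ (1 − β)/2` and `1 − λ₊ = γμ / (1 − λ₋) ≤ 2γμ/(1 − β)`. -/

theorem sq_sub_add_mul_add_mul_eq_zero_iff {R : Type*} [CommRing R] [NoZeroDivisors R]
    (r₁ r₂ x : R) : x ^ 2 - (r₁ + r₂) * x + r₁ * r₂ = 0 ↔ x = r₁ ∨ x = r₂ := by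
  rw [show x ^ 2 - (r₁ + r₂) * x + r₁ * r₂ = (x - r₁) * (x - r₂) by ring, mul_eq_zero,
    sub_eq_zero, sub_eq_zero]

theorem exists_le_add_eq_mul_eq_of_four_mul_le_sq {p q : ℝ} (h : 4 * q ≤ p ^ 2) :
    ∃ r₁ r₂ : ℝ, r₁ ≤ r₂ ∧ r₁ + r₂ = p ∧ r₁ * r₂ = q := by
  refine ⟨(p - √(p ^ 2 - 4 * q)) / 2, (p + √(p ^ 2 - 4 * q)) / 2, ?_, by ring, ?_⟩
  · linarith [Real.sqrt_nonneg (p ^ 2 - 4 * q)]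
  · linear_combination (-1 / 4 : ℝ) * Real.sq_sqrt (sub_nonneg.2 h)

section SignsFromVieta

variable {R : Type*} [Ring R] [LinearOrder R] [IsStrictOrderedRing R] {a b : R}

theorem nonneg_of_mul_nonneg_of_add_nonneg (hmul : 0 ≤ a * b) (hadd : 0 ≤ a + b) : 0 ≤ a :=
  le_of_not_gt fun ha ↦
    (mul_neg_of_neg_of_pos ha ((neg_pos.2 ha).trans_le (neg_le_iff_add_nonneg'.2 hadd))).not_ge hmul

theorem pos_of_mul_pos_of_add_pos (hmul : 0 < a * b) (hadd : 0 < a + b) : 0 < a :=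
  ((pos_and_pos_or_neg_and_neg_of_mul_pos hmul).resolve_right
    fun h ↦ (add_neg h.1 h.2).not_gt hadd).1

end SignsFromVieta

theorem Real.le_sqrt_mul_of_le {a b : ℝ} (h : a ≤ b) : a ≤ √(a * b) := by
  rcases lt_or_ge a 0 with ha | ha
  · exact ha.le.trans (Real.sqrt_nonneg _)
  · exact Real.le_sqrt_of_sq_le (by nlinarith)

theorem one_sub_le_two_mul_one_sub_sqrt {x : ℝ} (hx : 0 ≤ x) : 1 - x ≤ 2 * (1 - √x) := by
  nlinarith [Real.sq_sqrt hx, sq_nonneg (1 - √x)]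

/-- Roots of the Heavy-Ball characteristic polynomial
`λ² − (1 + β − γμ)λ + β` in the small-step regime
`γμ ≤ min{(1 − √β)², (1−β)/4}`: it has two real roots `λ₋ ≤ λ₊`, both lying in
`[0, 1)`, and the larger one satisfies `λ₊ ≥ 1 − 2γμ/(1−β)` (inertia of
momentum). -/
theorem heavy_ball_characteristic_roots
    (μ γ β : ℝ) (hμ : 0 < μ) (hγ : 0 < γ) (hβ0 : 0 ≤ β) (hβ1 : β < 1)
    (hsmall : γ * μ ≤ min ((1 - Real.sqrt β) ^ 2) ((1 - β) / 4)) :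
    ∃ lm lp : ℝ, lm ≤ lp ∧
      (∀ lam : ℝ, lam ^ 2 - (1 + β - γ * μ) * lam + β = 0 ↔ (lam = lm ∨ lam = lp)) ∧
      0 ≤ lm ∧ lm < 1 ∧ 0 ≤ lp ∧ lp < 1 ∧
      1 - 2 * γ * μ / (1 - β) ≤ lp := by
  have hcoeff : 2 * √β ≤ 1 + β - γ * μ := by
    nlinarith [Real.sq_sqrt hβ0, hsmall.trans (min_le_left _ _)]
  have hdisc : 4 * β ≤ (1 + β - γ * μ) ^ 2 :=
    calc 4 * β = (2 * √β) ^ 2 := by rw [mul_pow, Real.sq_sqrt hβ0]; norm_num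
      _ ≤ (1 + β - γ * μ) ^ 2 := pow_le_pow_left₀ (by positivity) hcoeff 2
  obtain ⟨lm, lp, hle, hsum, hprod⟩ := exists_le_add_eq_mul_eq_of_four_mul_le_sq hdisc
  have hγμ : 0 < γ * μ := mul_pos hγ hμ
  have hgap : (1 - lp) * (1 - lm) = γ * μ := by linear_combination hprod - hsum
  have hlp1 : lp < 1 := sub_pos.1 (pos_of_mul_pos_of_add_pos (hgap ▸ hγμ) (by linarith))
  have hlm0 : 0 ≤ lm :=
    nonneg_of_mul_nonneg_of_add_nonneg (hprod ▸ hβ0) (by linarith [Real.sqrt_nonneg β])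
  have hlm : lm ≤ √β := hprod ▸ Real.le_sqrt_mul_of_le hle
  refine ⟨lm, lp, hle, fun lam ↦ ?_, hlm0, hle.trans_lt hlp1, hlm0.trans hle, hlp1, ?_⟩
  · rw [← sq_sub_add_mul_add_mul_eq_zero_iff, hsum, hprod]
  · rw [sub_le_comm, le_div_iff₀ (sub_pos.2 hβ1)]
    calc (1 - lp) * (1 - β) ≤ (1 - lp) * (2 * (1 - lm)) :=
          mul_le_mul_of_nonneg_left (by linarith [hlm, one_sub_le_two_mul_one_sub_sqrt hβ0])
            (sub_nonneg.2 hlp1.le)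
      _ = 2 * γ * μ := by linear_combination 2 * hgap
end

section
/- In the bump-loss construction, assume additionally the hypotheses a/r ≤ 1/(12 C_ψ) and let Θ ⊆ ℝ^d be Lebesgue-measurable, 1 ≤ p < ∞ and 1 ≤ q < ∞. Let T ≥ 1 and 1 ≤ J ≤ T, let B₁, …, B_J be a partition of {1, …, T} into J disjoint consecutive blocks, let u ∈ {+1, −1}^J, and define the blockwise-constant sequence G^u by G^u_t := g_{u_j} for all t ∈ B_j. Then ( ∑_{t=1}^{T−1} ‖∇G^u_{t+1} − ∇G^u_t‖_{L^p(Θ)}^q )^{1/q} ≤ 2μa(1 + C_ψ) · vol(B(0,r))^{1/p} · J^{1/q}, where ‖h‖_{L^p(Θ)} := ( ∫_Θ ‖h(θ)‖^p dθ )^{1/p} and vol(B(0,r)) is the Lebesgue measure of the Euclidean ball of radius r in ℝ^d. -/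
/-!
The gradients of `g₊` and `g₋` differ by `2μa` times the gradient of the tilt
`θ ↦ ⟪θ, e₁⟫ ψ(θ / r)`. The tilt vanishes near every point with `‖θ‖ > r`, and on the ball
`‖θ‖ ≤ r` its gradient `ψ(θ / r) e₁ + (⟪θ, e₁⟫ / r) ∇ψ(θ / r)` has norm at most `1 + C_ψ`.
So every increment of `G^u` has `L^p(Θ)` norm at most `2μa(1 + C_ψ) vol(B(0,r))^{1/p}`, and
since the block index is monotone, at most `J` increments are nonzero.
-/

open MeasureTheory InnerProductSpace Finset
open scoped InnerProductSpace ENNReal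

section InnerProductSpace

variable {E : Type*} [NormedAddCommGroup E] [InnerProductSpace ℝ E] [CompleteSpace E]

theorem gradient_sub_mul_sub_gradient_sub_mul {f h : E → ℝ} {θ : E}
    (hf : DifferentiableAt ℝ f θ) (hh : DifferentiableAt ℝ h θ) (c₁ c₂ : ℝ) :
    gradient (fun y => f y - c₁ * h y) θ - gradient (fun y => f y - c₂ * h y) θ
      = (c₂ - c₁) • gradient h θ := by
  apply (toDual ℝ E).injective
  simp only [map_sub, map_smul, toDual_gradient, fderiv_fun_sub hf (hh.const_mul _),
    fderiv_const_mul hh]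
  module

theorem hasGradientAt_inner_mul_comp_smul {ψ : E → ℝ} {e θ : E} {r : ℝ}
    (hψ : DifferentiableAt ℝ ψ (r⁻¹ • θ)) :
    HasGradientAt (fun y => ⟪y, e⟫_ℝ * ψ (r⁻¹ • y))
      (ψ (r⁻¹ • θ) • e + (⟪θ, e⟫_ℝ * r⁻¹) • gradient ψ (r⁻¹ • θ)) θ := by
  have hinner : HasFDerivAt (fun y : E => ⟪y, e⟫_ℝ) (innerSL ℝ e) θ :=
    (innerSL ℝ e).hasFDerivAt.congr_of_eventuallyEq (.of_forall fun y => real_inner_comm e y)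
  rw [hasGradientAt_iff_hasFDerivAt]
  refine (hinner.mul (hψ.hasFDerivAt.comp θ ((hasFDerivAt_id θ).const_smul r⁻¹))).congr_fderiv ?_
  ext y
  simp only [map_add, map_smul, toDual_apply_apply, add_apply, smul_apply,
    ContinuousLinearMap.comp_apply, ContinuousLinearMap.id_apply, coe_innerSL_apply,
    Function.comp_apply, real_inner_comm e, ← inner_gradient_left, smul_eq_mul]
  ring

theorem norm_gradient_inner_mul_comp_smul_le {ψ : E → ℝ} {e θ : E} {r C : ℝ} (hr : 0 < r)
    (he : ‖e‖ ≤ 1) (hψ : DifferentiableAt ℝ ψ (r⁻¹ • θ)) (hψ_le : |ψ (r⁻¹ • θ)| ≤ 1)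
    (hgrad : ‖gradient ψ (r⁻¹ • θ)‖ ≤ C) (hθ : ‖θ‖ ≤ r) :
    ‖gradient (fun y => ⟪y, e⟫_ℝ * ψ (r⁻¹ • y)) θ‖ ≤ 1 + C := by
  rw [(hasGradientAt_inner_mul_comp_smul hψ).gradient]
  have hcoef : |⟪θ, e⟫_ℝ * r⁻¹| ≤ 1 := by
    rw [abs_mul, abs_inv, abs_of_pos hr, mul_inv_le_iff₀ hr, one_mul]
    calc |⟪θ, e⟫_ℝ| ≤ ‖θ‖ * ‖e‖ := abs_real_inner_le_norm θ e
      _ ≤ r := by nlinarith [norm_nonneg θ]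
  calc ‖ψ (r⁻¹ • θ) • e + (⟪θ, e⟫_ℝ * r⁻¹) • gradient ψ (r⁻¹ • θ)‖
      ≤ |ψ (r⁻¹ • θ)| * ‖e‖ + |⟪θ, e⟫_ℝ * r⁻¹| * ‖gradient ψ (r⁻¹ • θ)‖ := by
        refine (norm_add_le _ _).trans_eq ?_
        rw [norm_smul, norm_smul, Real.norm_eq_abs, Real.norm_eq_abs]
    _ ≤ 1 * 1 + 1 * C := by gcongr
    _ = 1 + C := by ring

noncomputable def bumpLoss (μ a r : ℝ) (e : E) (ψ : E → ℝ) (u : ℝ) (θ : E) : ℝ :=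
  μ / 2 * ‖θ‖ ^ 2 - u * (μ * a) * ⟪θ, e⟫_ℝ * ψ (r⁻¹ • θ)

variable {μ a r : ℝ} {e : E} {ψ : E → ℝ}

theorem gradient_bumpLoss_sub_gradient_bumpLoss (hψ : Differentiable ℝ ψ) (u₁ u₂ : ℝ) (θ : E) :
    gradient (bumpLoss μ a r e ψ u₁) θ - gradient (bumpLoss μ a r e ψ u₂) θ
      = ((u₂ - u₁) * (μ * a)) • gradient (fun y => ⟪y, e⟫_ℝ * ψ (r⁻¹ • y)) θ := by
  have hsplit : ∀ u, bumpLoss μ a r e ψ u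
      = fun y => μ / 2 * ‖y‖ ^ 2 - u * (μ * a) * (⟪y, e⟫_ℝ * ψ (r⁻¹ • y)) :=
    fun u => funext fun y => by rw [bumpLoss, mul_assoc (u * (μ * a))]
  rw [hsplit, hsplit, gradient_sub_mul_sub_gradient_sub_mul (f := fun y => μ / 2 * ‖y‖ ^ 2)
    ((differentiableAt_id.norm_sq ℝ).const_mul _)
    (hasGradientAt_inner_mul_comp_smul (hψ _)).differentiableAt, sub_mul]

theorem norm_gradient_bumpLoss_sub_le {C u₁ u₂ : ℝ} {θ : E} (hμa : 0 ≤ μ * a) (hr : 0 < r)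
    (he : ‖e‖ ≤ 1) (hψ : Differentiable ℝ ψ) (hψ_le : ∀ x, |ψ x| ≤ 1)
    (hgrad : ∀ x, ‖gradient ψ x‖ ≤ C) (hu₁ : |u₁| ≤ 1) (hu₂ : |u₂| ≤ 1) (hθ : ‖θ‖ ≤ r) :
    ‖gradient (bumpLoss μ a r e ψ u₁) θ - gradient (bumpLoss μ a r e ψ u₂) θ‖
      ≤ 2 * μ * a * (1 + C) := by
  rw [gradient_bumpLoss_sub_gradient_bumpLoss hψ, norm_smul, Real.norm_eq_abs, abs_mul,
    abs_of_nonneg hμa]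
  have hu : |u₂ - u₁| ≤ 2 := (abs_sub _ _).trans (by linarith)
  have hC : 0 ≤ C := (norm_nonneg _).trans (hgrad 0)
  calc |u₂ - u₁| * (μ * a) * ‖gradient (fun y => ⟪y, e⟫_ℝ * ψ (r⁻¹ • y)) θ‖
      ≤ 2 * (μ * a) * (1 + C) := by
        gcongr
        exact norm_gradient_inner_mul_comp_smul_le hr he (hψ _) (hψ_le _) (hgrad _) hθ
    _ = 2 * μ * a * (1 + C) := by ring

theorem gradient_bumpLoss_eq_of_lt_norm (hr : 0 < r) (hψ_zero : ∀ x, 1 ≤ ‖x‖ → ψ x = 0)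
    {θ : E} (hθ : r < ‖θ‖) (u₁ u₂ : ℝ) :
    gradient (bumpLoss μ a r e ψ u₁) θ = gradient (bumpLoss μ a r e ψ u₂) θ := by
  refine Filter.EventuallyEq.gradient_eq ?_
  filter_upwards [(isOpen_lt continuous_const continuous_norm).mem_nhds hθ] with y hy
  have hψy : ψ (r⁻¹ • y) = 0 := by
    refine hψ_zero _ ?_
    rw [norm_smul, norm_inv, Real.norm_of_nonneg hr.le, le_inv_mul_iff₀ hr, mul_one]
    exact hy.le
  simp only [bumpLoss, hψy, mul_zero]

end InnerProductSpace

theorem eLpNorm'_restrict_le_of_norm_le_of_eq_zero {α F : Type*} [MeasurableSpace α]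
    [NormedAddCommGroup F] {ν : Measure α} (Θ : Set α) {s : Set α} {f : α → F} {M p : ℝ}
    (hp : 0 < p) (hf_le : ∀ x ∈ s, ‖f x‖ ≤ M) (hf_zero : ∀ x ∉ s, f x = 0) :
    eLpNorm' f p (ν.restrict Θ) ≤ ENNReal.ofReal M * ν s ^ (1 / p) := by
  have hsupp : ∀ x ∉ s, ‖f x‖ₑ ^ p = 0 := fun x hx => by
    simp [hf_zero x hx, ENNReal.zero_rpow_of_pos hp]
  calc eLpNorm' f p (ν.restrict Θ) ≤ eLpNorm' f p ν :=
        eLpNorm'_mono_measure f Measure.restrict_le_self hp.le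
    _ = eLpNorm' f p (ν.restrict s) := by
        rw [eLpNorm'_eq_lintegral_enorm, eLpNorm'_eq_lintegral_enorm,
          setLIntegral_eq_of_support_subset (Function.support_subset_iff'.2 hsupp)]
    _ ≤ eLpNorm' (fun _ => ENNReal.ofReal M) p (ν.restrict s) := by
        refine eLpNorm'_mono_enorm_ae hp.le (.of_forall fun x => ?_)
        by_cases hx : x ∈ s
        · rw [enorm_eq_self, ← ofReal_norm]
          exact ENNReal.ofReal_le_ofReal (hf_le x hx)
        · simp [hf_zero x hx]
    _ = ENNReal.ofReal M * ν s ^ (1 / p) := by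
        rw [eLpNorm'_const _ hp, Measure.restrict_apply_univ, enorm_eq_self]

theorem card_filter_succ_ne_le {b : ℕ → ℕ} {T J : ℕ} (hb : MonotoneOn b (Set.Icc 1 T))
    (hb_lt : ∀ t ∈ Set.Icc 1 T, b t < J) :
    #{t ∈ Icc 1 (T - 1) | b (t + 1) ≠ b t} ≤ J := by
  set S := {t ∈ Icc 1 (T - 1) | b (t + 1) ≠ b t}
  have hS : ∀ t ∈ S, 1 ≤ t ∧ t + 1 ≤ T ∧ b t < b (t + 1) := fun t ht => by
    simp only [S, mem_filter, mem_Icc] at ht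
    exact ⟨ht.1.1, by omega, lt_of_le_of_ne (hb ⟨ht.1.1, by omega⟩ ⟨by omega, by omega⟩ (by omega))
      (Ne.symm ht.2)⟩
  have hjump : StrictMonoOn (fun t => b (t + 1)) S := fun s hs t ht hst => by
    obtain ⟨hs1, hsT, -⟩ := hS s hs
    obtain ⟨ht1, htT, hbt⟩ := hS t ht
    exact (hb ⟨by omega, by omega⟩ ⟨ht1, by omega⟩ hst).trans_lt hbt
  simpa using card_le_card_of_injOn (fun t => b (t + 1)) (t := range J)
    (fun t ht => mem_range.2 (hb_lt _ ⟨by omega, (hS t ht).2.1⟩)) hjump.injOn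

theorem ENNReal.sum_rpow_rpow_one_div_le {ι : Type*} {s : Finset ι} {x : ι → ℝ≥0∞} {K : ℝ≥0∞}
    {P : ι → Prop} [DecidablePred P] {n : ℕ} {q : ℝ} (hq : 0 < q) (hx : ∀ i ∈ s, x i ≤ K)
    (hx_zero : ∀ i ∈ s, ¬ P i → x i = 0) (hn : #{i ∈ s | P i} ≤ n) :
    (∑ i ∈ s, x i ^ q) ^ (1 / q) ≤ K * (n : ℝ≥0∞) ^ (1 / q) := by
  calc (∑ i ∈ s, x i ^ q) ^ (1 / q) = (∑ i ∈ s with P i, x i ^ q) ^ (1 / q) := by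
        rw [sum_filter_of_ne fun i hi hxi => ?_]
        by_contra hPi
        simp [hx_zero i hi hPi, ENNReal.zero_rpow_of_pos hq] at hxi
    _ ≤ (n * K ^ q) ^ (1 / q) := by
        gcongr
        refine (sum_le_card_nsmul _ _ (K ^ q) fun i hi => ?_).trans ?_
        · exact ENNReal.rpow_le_rpow (hx i (mem_filter.1 hi).1) hq.le
        · rw [nsmul_eq_mul]; gcongr
    _ = K * (n : ℝ≥0∞) ^ (1 / q) := by
        rw [ENNReal.mul_rpow_of_nonneg _ _ (by positivity), ← ENNReal.rpow_mul,
          mul_one_div_cancel hq.ne', ENNReal.rpow_one, mul_comm]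

theorem bump_loss_block_gradient_variation_bound_general
    (d : ℕ) (hd : 0 < d) (μ a r Cψ : ℝ)
    (hμ : 0 < μ) (ha : 0 < a) (hr : 0 < r)
    (ψ : EuclideanSpace ℝ (Fin d) → ℝ)
    (hψ_smooth : ContDiff ℝ 2 ψ)
    (hψ_range : ∀ x, 0 ≤ ψ x ∧ ψ x ≤ 1)
    (hψ_zero : ∀ x, 1 ≤ ‖x‖ → ψ x = 0)
    (hψ_grad : ∀ x, ‖gradient ψ x‖ ≤ Cψ)
    (e1 : EuclideanSpace ℝ (Fin d))
    (he1 : e1 = EuclideanSpace.single (⟨0, hd⟩ : Fin d) 1)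
    (g : ℝ → EuclideanSpace ℝ (Fin d) → ℝ)
    (hg : ∀ u θ, g u θ = μ / 2 * ‖θ‖ ^ 2 - u * (μ * a) * ⟪θ, e1⟫_ℝ * ψ (r⁻¹ • θ))
    (Θ : Set (EuclideanSpace ℝ (Fin d)))
    (p q : ℝ) (hp : 1 ≤ p) (hq : 1 ≤ q)
    (T J : ℕ)
    -- block-index map: `b t` is the index of the block containing time `t`
    (b : ℕ → ℕ)
    (hb_lt : ∀ t, 1 ≤ t → t ≤ T → b t < J)
    (hb_mono : ∀ s t, 1 ≤ s → s ≤ t → t ≤ T → b s ≤ b t)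
    -- signs of the blocks
    (u : ℕ → ℝ) (hu : ∀ j, u j = 1 ∨ u j = -1) :
    (∑ t ∈ Finset.Icc 1 (T - 1),
        ((∫⁻ θ in Θ,
            (‖gradient (g (u (b (t + 1)))) θ - gradient (g (u (b t))) θ‖₊ : ℝ≥0∞) ^ p
              ∂volume) ^ (1 / p)) ^ q) ^ (1 / q) ≤
      ENNReal.ofReal (2 * μ * a * (1 + Cψ))
        * volume (Metric.ball (0 : EuclideanSpace ℝ (Fin d)) r) ^ (1 / p)
        * (J : ℝ≥0∞) ^ (1 / q) := by
  obtain rfl : g = bumpLoss μ a r e1 ψ := funext fun v => funext (hg v)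
  have hp0 : 0 < p := by linarith
  have hψ : Differentiable ℝ ψ := hψ_smooth.differentiable (by norm_num)
  have hψ_abs : ∀ x, |ψ x| ≤ 1 := fun x => abs_le.2 ⟨by linarith [(hψ_range x).1], (hψ_range x).2⟩
  have hu_abs : ∀ j, |u j| ≤ 1 := fun j => by rcases hu j with h | h <;> simp [h]
  have hterm : ∀ t, eLpNorm' (fun θ => gradient (bumpLoss μ a r e1 ψ (u (b (t + 1)))) θ
      - gradient (bumpLoss μ a r e1 ψ (u (b t))) θ) p (volume.restrict Θ)
      ≤ ENNReal.ofReal (2 * μ * a * (1 + Cψ))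
        * volume (Metric.ball (0 : EuclideanSpace ℝ (Fin d)) r) ^ (1 / p) := fun t => by
    have : Nonempty (Fin d) := ⟨⟨0, hd⟩⟩
    rw [← Measure.addHaar_closedBall_eq_addHaar_ball]
    refine eLpNorm'_restrict_le_of_norm_le_of_eq_zero Θ hp0 (fun θ hθ => ?_) (fun θ hθ => ?_)
    · exact norm_gradient_bumpLoss_sub_le (by positivity) hr (by simp [he1]) hψ hψ_abs hψ_grad
        (hu_abs _) (hu_abs _) (mem_closedBall_zero_iff.1 hθ)
    · rw [gradient_bumpLoss_eq_of_lt_norm hr hψ_zero (not_le.1 (mt mem_closedBall_zero_iff.2 hθ)),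
        sub_self]
  refine ENNReal.sum_rpow_rpow_one_div_le (by linarith) (fun t _ => hterm t)
    (P := fun t => b (t + 1) ≠ b t) (fun t _ ht => ?_)
    (card_filter_succ_ne_le (fun s hs t ht hst => hb_mono s t hs.1 hst ht.2)
      (fun t ht => hb_lt t ht.1 ht.2))
  simp [not_not.1 ht, ENNReal.zero_rpow_of_pos hp0, hp0]

/-- Gradient-variation budget of the `J`-block construction: for a blockwise-constant
sequence `G^u_t = g_{u_j}` (for `t` in block `j`) built from the bump losses, the
`L_{p,q}` gradient-variation functional is at most
`2μa(1 + C_ψ)·vol(B(0,r))^{1/p}·J^{1/q}`. The block structure is encoded by a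
monotone surjective block-index map `b : {1,…,T} → {0,…,J−1}`. -/
theorem bump_loss_block_gradient_variation_bound
    (d : ℕ) (hd : 0 < d) (μ a r Cψ : ℝ)
    (hμ : 0 < μ) (ha : 0 < a) (hr : 0 < r) (hCψ : 0 < Cψ)
    (ψ : EuclideanSpace ℝ (Fin d) → ℝ)
    (hψ_smooth : ContDiff ℝ 2 ψ)
    (hψ_range : ∀ x, 0 ≤ ψ x ∧ ψ x ≤ 1)
    (hψ_one : ∀ x, ‖x‖ ≤ 1 / 2 → ψ x = 1)
    (hψ_zero : ∀ x, 1 ≤ ‖x‖ → ψ x = 0)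
    (hψ_grad : ∀ x, ‖gradient ψ x‖ ≤ Cψ)
    (hψ_hess : ∀ x, ‖fderiv ℝ (fun y => gradient ψ y) x‖ ≤ Cψ)
    (e1 : EuclideanSpace ℝ (Fin d))
    (he1 : e1 = EuclideanSpace.single (⟨0, hd⟩ : Fin d) 1)
    (g : ℝ → EuclideanSpace ℝ (Fin d) → ℝ)
    (hg : ∀ u θ, g u θ = μ / 2 * ‖θ‖ ^ 2 - u * (μ * a) * ⟪θ, e1⟫_ℝ * ψ (r⁻¹ • θ))
    (har : a / r ≤ 1 / (12 * Cψ))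
    (Θ : Set (EuclideanSpace ℝ (Fin d))) (hΘ : MeasurableSet Θ)
    (p q : ℝ) (hp : 1 ≤ p) (hq : 1 ≤ q)
    (T J : ℕ) (hT : 1 ≤ T) (hJ1 : 1 ≤ J) (hJT : J ≤ T)
    -- block-index map: `b t` is the index of the block containing time `t`
    (b : ℕ → ℕ)
    (hb_lt : ∀ t, 1 ≤ t → t ≤ T → b t < J)
    (hb_mono : ∀ s t, 1 ≤ s → s ≤ t → t ≤ T → b s ≤ b t)
    (hb_surj : ∀ j < J, ∃ t, 1 ≤ t ∧ t ≤ T ∧ b t = j)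
    -- signs of the blocks
    (u : ℕ → ℝ) (hu : ∀ j, u j = 1 ∨ u j = -1) :
    (∑ t ∈ Finset.Icc 1 (T - 1),
        ((∫⁻ θ in Θ,
            (‖gradient (g (u (b (t + 1)))) θ - gradient (g (u (b t))) θ‖₊ : ℝ≥0∞) ^ p
              ∂volume) ^ (1 / p)) ^ q) ^ (1 / q) ≤
      ENNReal.ofReal (2 * μ * a * (1 + Cψ))
        * volume (Metric.ball (0 : EuclideanSpace ℝ (Fin d)) r) ^ (1 / p)
        * (J : ℝ≥0∞) ^ (1 / q) :=
  bump_loss_block_gradient_variation_bound_general d hd μ a r Cψ hμ ha hr ψ hψ_smooth hψ_range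
    hψ_zero hψ_grad e1 he1 g hg Θ p q hp hq T J b hb_lt hb_mono u hu
end

section
/- Let (Ω, 𝓕, (𝓕_t)_{t=0}^T, ℙ) be a filtered probability space and let Z₁, …, Z_T be real random variables such that each Z_t is 𝓕_t-measurable, 𝔼[Z_t | 𝓕_{t−1}] = 0 a.s., and Z_t is conditionally sub-exponential: there are constants K_t > 0 with 𝔼[exp(|Z_t|/K_t) | 𝓕_{t−1}] ≤ 2 almost surely, for t = 1, …, T. Then there exists a universal constant C > 0 (independent of T, the K_t and the filtration) such that for all s ≥ 0: ℙ( ∑_{t=1}^T Z_t ≥ s ) ≤ exp( −min{ s²/(C ∑_{t=1}^T K_t²), s/(C max_{1≤t≤T} K_t) } ). -/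
/-!
Chernoff's method. Since `exp x ≤ 1 + x + x² exp |x|` and `u² ≤ 16 exp (u / 2)` for `u ≥ 0`,
every `λ` with `2 K_t |λ| ≤ 1` satisfies
`exp (λ Z_t) ≤ 1 + λ Z_t + 16 λ² K_t² exp (|Z_t| / K_t)`; taking `𝔼[· | 𝓕_{t-1}]` kills the linear
term and gives `𝔼[exp (λ Z_t) | 𝓕_{t-1}] ≤ 1 + 32 λ² K_t² ≤ exp (32 λ² K_t²)`. Peeling off the
increments one at a time bounds the moment generating function of `∑ Z_t` at `λ` by
`exp (32 λ² ∑ K_t²)`, and Markov's inequality with `λ = min (s / (64 ∑ K_t²)) (1 / (2 max K_t))`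
gives the claim with `C = 128`.
-/

open MeasureTheory Real Finset

theorem Real.exp_le_one_add_add_sq_mul_exp_abs (x : ℝ) : exp x ≤ 1 + x + x ^ 2 * exp |x| := by
  have h1 : 1 ≤ exp |x| := one_le_exp (abs_nonneg x)
  rcases le_or_gt |x| 1 with hx | hx
  · have := (abs_le.1 (abs_exp_sub_one_sub_id_le hx)).2
    nlinarith [sq_nonneg x]
  · have hx2 : 1 ≤ x ^ 2 := by nlinarith [sq_abs x]
    rcases le_or_gt 0 x with hx0 | hx0
    · nlinarith [exp_le_exp.2 (le_abs_self x)]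
    · nlinarith [exp_le_one_iff.2 hx0.le, abs_of_neg hx0]

theorem Real.sq_le_sixteen_mul_exp_half {u : ℝ} (hu : 0 ≤ u) : u ^ 2 ≤ 16 * exp (u / 2) := by
  have h : u / 4 + 1 ≤ exp (u / 4) := add_one_le_exp _
  have hsq : exp (u / 4) ^ 2 = exp (u / 2) := by rw [← exp_nat_mul]; ring_nf
  nlinarith [pow_le_pow_left₀ (by positivity) h 2]

theorem Real.exp_mul_le_of_two_mul_mul_abs_le_one {K l z : ℝ} (hK : 0 < K)
    (hl : 2 * K * |l| ≤ 1) :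
    exp (l * z) ≤ 1 + l * z + 16 * l ^ 2 * K ^ 2 * exp (|z| / K) := by
  have hlz : |l * z| ≤ |z| / K / 2 := by
    rw [abs_mul, le_div_iff₀ two_pos, le_div_iff₀ hK]
    nlinarith [abs_nonneg z]
  have hsq : (|z| / K) ^ 2 ≤ 16 * exp (|z| / K / 2) :=
    sq_le_sixteen_mul_exp_half (by positivity)
  have hexp : exp (|z| / K / 2) ^ 2 = exp (|z| / K) := by rw [← exp_nat_mul]; ring_nf
  have hlz2 : (l * z) ^ 2 = l ^ 2 * K ^ 2 * (|z| / K) ^ 2 := by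
    rw [div_pow, sq_abs]; field_simp
  calc exp (l * z) ≤ 1 + l * z + (l * z) ^ 2 * exp |l * z| :=
        exp_le_one_add_add_sq_mul_exp_abs _
    _ ≤ 1 + l * z + l ^ 2 * K ^ 2 * (16 * exp (|z| / K / 2)) * exp (|z| / K / 2) := by
        rw [hlz2]; gcongr
    _ = 1 + l * z + 16 * l ^ 2 * K ^ 2 * exp (|z| / K) := by rw [← hexp]; ring

theorem Finset.le_ciSup_of_mem {ι α : Type*} [ConditionallyCompleteLattice α] {f : ι → α}
    {S : Finset ι} {i : ι} (hi : i ∈ S) : f i ≤ ⨆ j ∈ S, f j :=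
  le_ciSup₂ (f := fun j (_ : j ∈ S) => f j) ((S.finite_toSet.image f).bddAbove.mono
    (by simp only [Set.iUnion_subset_iff, Set.range_subset_iff]; exact fun j hj => ⟨j, hj, rfl⟩))
    i hi

theorem exists_chernoff_parameter {V M s : ℝ} (hV : 0 < V) (hM : 0 < M) (hs : 0 ≤ s) :
    ∃ l, 0 ≤ l ∧ 2 * M * l ≤ 1 ∧
      32 * l ^ 2 * V - l * s ≤ -min (s ^ 2 / (128 * V)) (s / (128 * M)) := by
  rcases le_total (s / (64 * V)) (1 / (2 * M)) with h | h
  · refine ⟨s / (64 * V), by positivity, by rwa [le_div_iff₀ (by positivity), mul_comm] at h, ?_⟩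
    calc 32 * (s / (64 * V)) ^ 2 * V - s / (64 * V) * s = -(s ^ 2 / (128 * V)) := by
          field_simp; ring
      _ ≤ _ := neg_le_neg (min_le_left _ _)
  · refine ⟨1 / (2 * M), by positivity, by field_simp; rfl, ?_⟩
    have hsV : 32 * V ≤ M * s := by
      rw [div_le_div_iff₀ (by positivity) (by positivity)] at h; linarith
    calc 32 * (1 / (2 * M)) ^ 2 * V - 1 / (2 * M) * s ≤ -(s / (128 * M)) := by
          rw [← sub_nonpos]
          field_simp
          nlinarith
      _ ≤ _ := neg_le_neg (min_le_right _ _)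

section ConditionalExpectation

variable {Ω : Type*} {m m0 : MeasurableSpace Ω} {μ : Measure Ω}

/- The product of an `m`-measurable `X ≥ 0` with `Y ≥ 0` need not be integrable a priori, so the
tower step is done for lower integrals: on `m`, the measure with density `Y` is at most `B • μ`. -/
theorem lintegral_mul_ofReal_le_of_condExp_le [IsFiniteMeasure μ] (hm : m ≤ m0)
    {f : Ω → ENNReal} {Y : Ω → ℝ} {B : ℝ} (hf : Measurable[m] f) (hY0 : 0 ≤ᵐ[μ] Y)
    (hY : Integrable Y μ) (hYB : ∀ᵐ ω ∂μ, μ[Y|m] ω ≤ B) :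
    ∫⁻ ω, f ω * ENNReal.ofReal (Y ω) ∂μ ≤ ENNReal.ofReal B * ∫⁻ ω, f ω ∂μ := by
  have hdensity : (μ.withDensity fun ω => ENNReal.ofReal (Y ω)).trim hm ≤
      (ENNReal.ofReal B • μ).trim hm := by
    refine Measure.le_iff.2 fun s hs => ?_
    rw [trim_measurableSet_eq hm hs, trim_measurableSet_eq hm hs,
      withDensity_apply _ (hm s hs), ← ofReal_integral_eq_lintegral_ofReal hY.restrict
      (ae_restrict_of_ae hY0), ← setIntegral_condExp hm hY hs, Measure.smul_apply, smul_eq_mul,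
      ← ofReal_measureReal, ← ENNReal.ofReal_mul' measureReal_nonneg]
    refine ENNReal.ofReal_le_ofReal ?_
    calc ∫ ω in s, μ[Y|m] ω ∂μ ≤ ∫ ω in s, B ∂μ :=
          setIntegral_mono_ae integrable_condExp.integrableOn (integrableOn_const ..) hYB
      _ = B * μ.real s := by rw [setIntegral_const, smul_eq_mul, mul_comm]
  calc ∫⁻ ω, f ω * ENNReal.ofReal (Y ω) ∂μ
        = ∫⁻ ω, f ω ∂μ.withDensity fun ω => ENNReal.ofReal (Y ω) := by
        rw [lintegral_withDensity_eq_lintegral_mul₀ hY.1.aemeasurable.ennreal_ofReal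
          (hf.mono hm le_rfl).aemeasurable]
        simp only [Pi.mul_apply, mul_comm]
    _ = ∫⁻ ω, f ω ∂(μ.withDensity fun ω => ENNReal.ofReal (Y ω)).trim hm :=
        (lintegral_trim hm hf).symm
    _ ≤ ∫⁻ ω, f ω ∂(ENNReal.ofReal B • μ).trim hm := lintegral_mono' hdensity le_rfl
    _ = ENNReal.ofReal B * ∫⁻ ω, f ω ∂μ := by
        rw [lintegral_trim hm hf, lintegral_smul_measure, smul_eq_mul]

theorem lintegral_ofReal_mul_le_of_condExp_le [IsFiniteMeasure μ] (hm : m ≤ m0) {X Y : Ω → ℝ}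
    {B : ℝ} (hX0 : 0 ≤ X) (hXm : StronglyMeasurable[m] X) (hY0 : 0 ≤ Y) (hY : Integrable Y μ)
    (hYB : ∀ᵐ ω ∂μ, μ[Y|m] ω ≤ B) :
    ∫⁻ ω, ENNReal.ofReal (X ω * Y ω) ∂μ ≤ ENNReal.ofReal B * ∫⁻ ω, ENNReal.ofReal (X ω) ∂μ := by
  simp only [ENNReal.ofReal_mul (hX0 _)]
  exact lintegral_mul_ofReal_le_of_condExp_le hm hXm.measurable.ennreal_ofReal
    (Filter.Eventually.of_forall hY0) hY hYB

theorem integrable_mul_of_condExp_le [IsFiniteMeasure μ] (hm : m ≤ m0) {X Y : Ω → ℝ} {B : ℝ}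
    (hX0 : 0 ≤ X) (hXm : StronglyMeasurable[m] X) (hX : Integrable X μ) (hY0 : 0 ≤ Y)
    (hY : Integrable Y μ) (hYB : ∀ᵐ ω ∂μ, μ[Y|m] ω ≤ B) :
    Integrable (fun ω => X ω * Y ω) μ := by
  refine ⟨(hXm.mono hm).aestronglyMeasurable.mul hY.1, ?_⟩
  rw [hasFiniteIntegral_iff_ofReal
    (Filter.Eventually.of_forall fun ω => mul_nonneg (hX0 ω) (hY0 ω))]
  refine (lintegral_ofReal_mul_le_of_condExp_le hm hX0 hXm hY0 hY hYB).trans_lt ?_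
  exact ENNReal.mul_lt_top ENNReal.ofReal_lt_top
    ((hasFiniteIntegral_iff_ofReal (Filter.Eventually.of_forall hX0)).1 hX.2)

theorem integral_mul_le_of_condExp_le [IsFiniteMeasure μ] (hm : m ≤ m0) {X Y : Ω → ℝ} {B : ℝ}
    (hB : 0 ≤ B) (hX0 : 0 ≤ X) (hXm : StronglyMeasurable[m] X) (hX : Integrable X μ)
    (hY0 : 0 ≤ Y) (hY : Integrable Y μ) (hYB : ∀ᵐ ω ∂μ, μ[Y|m] ω ≤ B) :
    ∫ ω, X ω * Y ω ∂μ ≤ B * ∫ ω, X ω ∂μ := by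
  have hXY := integrable_mul_of_condExp_le hm hX0 hXm hX hY0 hY hYB
  rw [← ENNReal.ofReal_le_ofReal_iff (mul_nonneg hB (integral_nonneg hX0)),
    ofReal_integral_eq_lintegral_ofReal hXY
      (Filter.Eventually.of_forall fun ω => mul_nonneg (hX0 ω) (hY0 ω)),
    ENNReal.ofReal_mul hB, ofReal_integral_eq_lintegral_ofReal hX (Filter.Eventually.of_forall hX0)]
  exact lintegral_ofReal_mul_le_of_condExp_le hm hX0 hXm hY0 hY hYB

theorem integrable_exp_mul_of_mul_abs_le_one {Z : Ω → ℝ} {K l : ℝ} (hK : 0 < K)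
    (hl : K * |l| ≤ 1) (hZ : AEStronglyMeasurable Z μ)
    (hexp : Integrable (fun ω => exp (|Z ω| / K)) μ) :
    Integrable (fun ω => exp (l * Z ω)) μ := by
  refine hexp.mono' (continuous_exp.comp_aestronglyMeasurable (hZ.const_mul l))
    (Filter.Eventually.of_forall fun ω => ?_)
  rw [norm_of_nonneg (exp_pos _).le, exp_le_exp, le_div_iff₀ hK]
  calc l * Z ω * K ≤ |l| * |Z ω| * K := by
        rw [← abs_mul]; exact mul_le_mul_of_nonneg_right (le_abs_self _) hK.le
    _ ≤ |Z ω| := by nlinarith [abs_nonneg (Z ω)]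

theorem condExp_exp_mul_le_of_condExp_exp_abs_div_le_two [IsFiniteMeasure μ] (hm : m ≤ m0)
    {Z : Ω → ℝ} {K l : ℝ} (hK : 0 < K) (hl : 2 * K * |l| ≤ 1) (hZ : Integrable Z μ)
    (hZ0 : μ[Z|m] =ᵐ[μ] 0) (hexp : Integrable (fun ω => exp (|Z ω| / K)) μ)
    (hexp2 : ∀ᵐ ω ∂μ, μ[fun ω => exp (|Z ω| / K)|m] ω ≤ 2) :
    ∀ᵐ ω ∂μ, μ[fun ω => exp (l * Z ω)|m] ω ≤ exp (32 * l ^ 2 * K ^ 2) := by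
  set E : Ω → ℝ := fun ω => exp (|Z ω| / K)
  set c := 16 * l ^ 2 * K ^ 2
  have hmono : μ[fun ω => exp (l * Z ω)|m] ≤ᵐ[μ] μ[(fun _ => 1) + l • Z + c • E|m] :=
    condExp_mono
      (integrable_exp_mul_of_mul_abs_le_one hK (by nlinarith [abs_nonneg l]) hZ.1 hexp)
      (((integrable_const 1).add (hZ.smul l)).add (hexp.smul c))
      (Filter.Eventually.of_forall fun ω => exp_mul_le_of_two_mul_mul_abs_le_one hK hl)
  have hlinear : μ[(fun _ => 1) + l • Z + c • E|m] =ᵐ[μ]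
      (fun _ => 1) + l • μ[Z|m] + c • μ[E|m] := by
    refine (condExp_add ((integrable_const 1).add (hZ.smul l)) (hexp.smul c) m).trans ?_
    refine ((condExp_add (integrable_const 1) (hZ.smul l) m).add (condExp_smul c E m)).trans ?_
    rw [condExp_const hm]
    exact ((Filter.EventuallyEq.refl _ _).add (condExp_smul l Z m)).add
      (Filter.EventuallyEq.refl _ _)
  filter_upwards [hmono, hlinear, hZ0, hexp2] with ω hω hlinearω hZω hexpω
  simp only [hlinearω, hZω, Pi.add_apply, Pi.smul_apply, Pi.zero_apply, smul_eq_mul] at hω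
  calc μ[fun ω => exp (l * Z ω)|m] ω ≤ 1 + 2 * c := by nlinarith [sq_nonneg (l * K)]
    _ ≤ exp (32 * l ^ 2 * K ^ 2) := by linarith [add_one_le_exp (32 * l ^ 2 * K ^ 2)]

theorem integrable_and_integral_exp_mul_sum_le_of_condExp_le [IsProbabilityMeasure μ]
    {ℱ : Filtration ℕ m0} {Z : ℕ → Ω → ℝ} {c : ℕ → ℝ} {l : ℝ} (n : ℕ)
    (hZm : ∀ t, 1 ≤ t → t ≤ n → StronglyMeasurable[ℱ t] (Z t))
    (hint : ∀ t, 1 ≤ t → t ≤ n → Integrable (fun ω => exp (l * Z t ω)) μ)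
    (hc : ∀ t, 1 ≤ t → t ≤ n →
      ∀ᵐ ω ∂μ, μ[fun ω => exp (l * Z t ω)|ℱ (t - 1)] ω ≤ exp (c t)) :
    Integrable (fun ω => exp (l * ∑ t ∈ Icc 1 n, Z t ω)) μ ∧
      ∫ ω, exp (l * ∑ t ∈ Icc 1 n, Z t ω) ∂μ ≤ exp (∑ t ∈ Icc 1 n, c t) := by
  induction n with
  | zero => simp
  | succ n ih =>
    obtain ⟨ihint, ihle⟩ := ih (fun t h1 _ => hZm t h1 (by omega))
      (fun t h1 _ => hint t h1 (by omega)) (fun t h1 _ => hc t h1 (by omega))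
    have hSm : StronglyMeasurable[ℱ n] fun ω => exp (l * ∑ t ∈ Icc 1 n, Z t ω) :=
      continuous_exp.comp_stronglyMeasurable <| (Finset.stronglyMeasurable_fun_sum _
        fun t ht => (hZm t (mem_Icc.1 ht).1 (by grind)).mono (ℱ.mono (mem_Icc.1 ht).2)).const_mul l
    have hsplit (ω : Ω) : exp (l * ∑ t ∈ Icc 1 (n + 1), Z t ω) =
        exp (l * ∑ t ∈ Icc 1 n, Z t ω) * exp (l * Z (n + 1) ω) := by
      rw [sum_Icc_succ_top (by omega), mul_add, exp_add]
    simp_rw [hsplit]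
    rw [sum_Icc_succ_top (by omega) c, exp_add]
    have hstep := hc (n + 1) (by omega) le_rfl
    rw [Nat.add_sub_cancel] at hstep
    have hexp_nonneg (f : Ω → ℝ) : 0 ≤ fun ω => exp (f ω) := fun _ => (exp_pos _).le
    refine ⟨integrable_mul_of_condExp_le (ℱ.le n) (hexp_nonneg _) hSm ihint (hexp_nonneg _)
      (hint (n + 1) (by omega) le_rfl) hstep, ?_⟩
    calc ∫ ω, exp (l * ∑ t ∈ Icc 1 n, Z t ω) * exp (l * Z (n + 1) ω) ∂μ
        ≤ exp (c (n + 1)) * ∫ ω, exp (l * ∑ t ∈ Icc 1 n, Z t ω) ∂μ :=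
          integral_mul_le_of_condExp_le (ℱ.le n) (exp_pos _).le (hexp_nonneg _) hSm ihint
            (hexp_nonneg _) (hint (n + 1) (by omega) le_rfl) hstep
      _ ≤ exp (∑ t ∈ Icc 1 n, c t) * exp (c (n + 1)) := by
          rw [mul_comm]; exact mul_le_mul_of_nonneg_right ihle (exp_pos _).le

end ConditionalExpectation

/-- Bernstein-type concentration inequality for martingale difference sequences with
conditionally sub-exponential increments: there is a universal constant `C` such
that if `𝔼[Z_t | 𝓕_{t−1}] = 0` and `𝔼[exp(|Z_t|/K_t) | 𝓕_{t−1}] ≤ 2` a.s. for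
`t = 1, …, T`, then for all `s ≥ 0`,
`ℙ(∑ Z_t ≥ s) ≤ exp(−min{s²/(C∑K_t²), s/(C·max K_t)})`. -/
theorem bernstein_subexponential_mds :
    ∃ C : ℝ, 0 < C ∧
      ∀ (Ω : Type) (m0 : MeasurableSpace Ω) (P : Measure Ω), IsProbabilityMeasure P →
      ∀ (ℱ : Filtration ℕ m0) (T : ℕ) (Z : ℕ → Ω → ℝ) (K : ℕ → ℝ),
        (∀ t, 1 ≤ t → t ≤ T → 0 < K t) →
        (∀ t, 1 ≤ t → t ≤ T → StronglyMeasurable[ℱ t] (Z t)) →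
        (∀ t, 1 ≤ t → t ≤ T → Integrable (Z t) P) →
        (∀ t, 1 ≤ t → t ≤ T → P[Z t | ℱ (t - 1)] =ᵐ[P] fun _ => 0) →
        (∀ t, 1 ≤ t → t ≤ T →
          Integrable (fun ω => Real.exp (|Z t ω| / K t)) P) →
        (∀ t, 1 ≤ t → t ≤ T →
          ∀ᵐ ω ∂P, (P[fun ω' => Real.exp (|Z t ω'| / K t) | ℱ (t - 1)]) ω ≤ 2) →
        ∀ s : ℝ, 0 ≤ s →
          P {ω | s ≤ ∑ t ∈ Finset.Icc 1 T, Z t ω} ≤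
            ENNReal.ofReal (Real.exp (-(min
              (s ^ 2 / (C * ∑ t ∈ Finset.Icc 1 T, K t ^ 2))
              (s / (C * ⨆ t ∈ Finset.Icc 1 T, K t))))) := by
  refine ⟨128, by norm_num, ?_⟩
  intro Ω m0 P hP ℱ T Z K hK hZm hZ hZ0 hexp hexp2 s hs
  rcases Nat.eq_zero_or_pos T with rfl | hT
  · simpa using prob_le_one
  set V := ∑ t ∈ Icc 1 T, K t ^ 2
  set M := ⨆ t ∈ Icc 1 T, K t
  have hKM (t : ℕ) (h1 : 1 ≤ t) (h2 : t ≤ T) : K t ≤ M := le_ciSup_of_mem (mem_Icc.2 ⟨h1, h2⟩)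
  have hM : 0 < M := (hK 1 le_rfl hT).trans_le (hKM 1 le_rfl hT)
  have hV : 0 < V := sum_pos (fun t ht => pow_pos (hK t (mem_Icc.1 ht).1 (mem_Icc.1 ht).2) 2)
    ⟨1, mem_Icc.2 ⟨le_rfl, hT⟩⟩
  obtain ⟨l, hl0, hlM, hexponent⟩ := exists_chernoff_parameter hV hM hs
  have hlK (t : ℕ) (h1 : 1 ≤ t) (h2 : t ≤ T) : 2 * K t * |l| ≤ 1 := by
    rw [abs_of_nonneg hl0]; nlinarith [hKM t h1 h2]
  obtain ⟨hint, hmgf⟩ := integrable_and_integral_exp_mul_sum_le_of_condExp_le (μ := P)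
    (c := fun t => 32 * l ^ 2 * K t ^ 2) T hZm
    (fun t h1 h2 => integrable_exp_mul_of_mul_abs_le_one (hK t h1 h2)
      (by nlinarith [hlK t h1 h2, hK t h1 h2, abs_nonneg l]) (hZ t h1 h2).1 (hexp t h1 h2))
    (fun t h1 h2 => condExp_exp_mul_le_of_condExp_exp_abs_div_le_two (ℱ.le _) (hK t h1 h2)
      (hlK t h1 h2) (hZ t h1 h2) (hZ0 t h1 h2) (hexp t h1 h2) (hexp2 t h1 h2))
  rw [← mul_sum] at hmgf
  calc P {ω | s ≤ ∑ t ∈ Icc 1 T, Z t ω}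
        = ENNReal.ofReal (P.real {ω | s ≤ ∑ t ∈ Icc 1 T, Z t ω}) := (ofReal_measureReal).symm
    _ ≤ ENNReal.ofReal
          (exp (-l * s) * ProbabilityTheory.mgf (fun ω => ∑ t ∈ Icc 1 T, Z t ω) P l) :=
        ENNReal.ofReal_le_ofReal (ProbabilityTheory.measure_ge_le_exp_mul_mgf s hl0 hint)
    _ ≤ ENNReal.ofReal (exp (-l * s) * exp (32 * l ^ 2 * V)) := by gcongr; exact hmgf
    _ ≤ _ := by rw [← exp_add]; gcongr; linarith
end
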